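/- arXiv:1310.7869 — 6 statements merged into one kernel-verified Lean document; each statement's English description precedes it below -/
import Mathlib

section
/- For every α ∈ (0,2) and every s > 0, the series ∑_{k=1}^∞ γ_k s^{-kα/2-1} converges absolutely, where γ_k = ((-1)^{k+1} Γ(kα/2+1)/(π·k!))·sin(πkα/2). -/
open Real MeasureTheory Set Filter Topology

/-- The coefficients `γ_k = ((-1)^{k+1} Γ(kα/2+1)/(π k!)) sin(πkα/2)`. -/
noncomputable def gam (α : ℝ) (k : ℕ) : ℝ :=
  ((-1 : ℝ) ^ (k + 1) * Real.Gamma ((k : ℝ) * α / 2 + 1) / (π * k.factorial)) *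
    Real.sin (π * k * α / 2)

/-- Gautschi-type inequality from log-convexity of `Γ`. -/
lemma gautschi (x δ : ℝ) (hx : 1 ≤ x) (hδ0 : 0 ≤ δ) (hδ1 : δ ≤ 1) :
    Real.Gamma (x + δ) ≤ Real.Gamma x * x ^ δ := by
  have hx0 : (0:ℝ) < x := by linarith
  have hx10 : (0:ℝ) < x + 1 := by linarith
  have key := Real.convexOn_log_Gamma.2 (Set.mem_Ioi.mpr hx0) (Set.mem_Ioi.mpr hx10)
    (by linarith : (0:ℝ) ≤ 1 - δ) hδ0 (by ring)
  have hsmul : (1 - δ) • x + δ • (x + 1) = x + δ := by simp [smul_eq_mul]; ring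
  rw [hsmul] at key
  simp only [Function.comp_apply, smul_eq_mul] at key
  have hΓ1 : Real.Gamma (x + 1) = x * Real.Gamma x := by
    rw [Real.Gamma_add_one (ne_of_gt hx0)]
  have hΓpos : 0 < Real.Gamma x := Real.Gamma_pos_of_pos hx0
  have hΓdpos : 0 < Real.Gamma (x + δ) := Real.Gamma_pos_of_pos (by linarith)
  have hRHS : (1 - δ) * Real.log (Real.Gamma x) + δ * Real.log (Real.Gamma (x + 1)) =
      Real.log (Real.Gamma x * x ^ δ) := by
    rw [hΓ1, Real.log_mul (ne_of_gt hx0) (ne_of_gt hΓpos),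
      Real.log_mul (ne_of_gt hΓpos) (ne_of_gt (Real.rpow_pos_of_pos hx0 δ)),
      Real.log_rpow hx0]
    ring
  rw [hRHS] at key
  exact (Real.log_le_log_iff hΓdpos (by positivity)).mp key

/-- For every `α ∈ (0,2)` and every `s > 0`, the series
`∑_{k=1}^∞ γ_k s^{-kα/2-1}` converges absolutely. -/
theorem stmt0 (α : ℝ) (hα : α ∈ Set.Ioo (0 : ℝ) 2) (s : ℝ) (hs : 0 < s) :
    Summable (fun k : ℕ => |gam α (k + 1) * s ^ (-((k : ℝ) + 1) * α / 2 - 1)|) := by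
  obtain ⟨hα0, hα2⟩ := hα
  set b : ℕ → ℝ := fun k =>
    Real.Gamma (((k : ℝ) + 1) * α / 2 + 1) / (π * (k + 1).factorial) *
      s ^ (-((k : ℝ) + 1) * α / 2 - 1) with hb
  have hbpos : ∀ k, 0 < b k := by
    intro k
    have := Real.Gamma_pos_of_pos (show (0:ℝ) < ((k : ℝ) + 1) * α / 2 + 1 by positivity)
    have := Real.pi_pos
    have := Real.rpow_pos_of_pos hs (-((k : ℝ) + 1) * α / 2 - 1)
    positivity
  have hle : ∀ k, |gam α (k + 1) * s ^ (-((k : ℝ) + 1) * α / 2 - 1)| ≤ b k := by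
    intro k
    rw [abs_mul, abs_of_pos (Real.rpow_pos_of_pos hs _)]
    apply mul_le_mul_of_nonneg_right _ (le_of_lt (Real.rpow_pos_of_pos hs _))
    rw [gam, abs_mul, abs_div, abs_mul]
    have hc : ((k + 1 : ℕ) : ℝ) = (k : ℝ) + 1 := by push_cast; ring
    rw [hc]
    have hΓpos := Real.Gamma_pos_of_pos (show (0:ℝ) < ((k : ℝ) + 1) * α / 2 + 1 by positivity)
    have hfac : (0:ℝ) < ((k + 1).factorial : ℝ) := by positivity
    calc |(-1 : ℝ) ^ (k + 1 + 1)| * |Real.Gamma (((k:ℝ) + 1) * α / 2 + 1)| /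
        |π * ((k + 1).factorial : ℝ)| * |Real.sin (π * ((k:ℝ) + 1) * α / 2)|
        ≤ |(-1 : ℝ) ^ (k + 1 + 1)| * |Real.Gamma (((k:ℝ) + 1) * α / 2 + 1)| /
          |π * ((k + 1).factorial : ℝ)| * 1 := by
          apply mul_le_mul_of_nonneg_left (abs_sin_le_one _) (by positivity)
      _ = Real.Gamma (((k:ℝ) + 1) * α / 2 + 1) / (π * (k + 1).factorial) := by
          rw [abs_pow, abs_neg, abs_one, one_pow, one_mul, mul_one,
            abs_of_pos hΓpos, abs_of_pos (by positivity : (0:ℝ) < π * ((k + 1).factorial : ℝ))]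
  refine Summable.of_nonneg_of_le (fun k => abs_nonneg _) hle ?_
  -- ratio test for b
  refine summable_of_ratio_norm_eventually_le (r := 1/2) (by norm_num) ?_
  -- the key ratio bound: b (k+1) ≤ (k+2)^(α/2-1) * s^(-α/2) * b k
  have hratio : ∀ k : ℕ, b (k + 1) ≤ ((k:ℝ) + 2) ^ (α/2 - 1) * s ^ (-(α/2)) * b k := by
    intro k
    set x : ℝ := ((k:ℝ) + 1) * α / 2 + 1 with hx
    have hk0 : (0:ℝ) ≤ (k:ℝ) := Nat.cast_nonneg k
    have hx1 : (1:ℝ) ≤ x := by rw [hx]; nlinarith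
    have hxk : x ≤ (k:ℝ) + 2 := by rw [hx]; nlinarith
    have hG := gautschi x (α/2) hx1 (by linarith) (by linarith)
    have hxpos : (0:ℝ) < x := by linarith
    have hxpow : x ^ (α/2) ≤ ((k:ℝ) + 2) ^ (α/2) :=
      Real.rpow_le_rpow (le_of_lt hxpos) hxk (by linarith)
    have hΓx : 0 < Real.Gamma x := Real.Gamma_pos_of_pos hxpos
    have harg : ((k:ℝ) + 1 + 1) * α / 2 + 1 = x + α/2 := by rw [hx]; ring
    have hexp : -((k:ℝ) + 1 + 1) * α / 2 - 1 = (-((k:ℝ) + 1) * α / 2 - 1) + (-(α/2)) := by ring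
    have hfac : ((k + 1 + 1).factorial : ℝ) = ((k:ℝ) + 2) * ((k + 1).factorial : ℝ) := by
      rw [Nat.factorial_succ]; push_cast; ring
    have hspos := Real.rpow_pos_of_pos hs (-((k:ℝ) + 1) * α / 2 - 1)
    calc b (k + 1) = Real.Gamma (x + α/2) / (π * ((k:ℝ) + 2) * (k + 1).factorial) *
          (s ^ (-((k:ℝ) + 1) * α / 2 - 1) * s ^ (-(α/2))) := by
          simp only [hb]
          push_cast
          rw [harg, hexp, Real.rpow_add hs, hfac]
          ring
      _ ≤ Real.Gamma x * (((k:ℝ) + 2) ^ (α/2)) / (π * ((k:ℝ) + 2) * (k + 1).factorial) *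
          (s ^ (-((k:ℝ) + 1) * α / 2 - 1) * s ^ (-(α/2))) := by
          apply mul_le_mul_of_nonneg_right _ (by positivity)
          apply div_le_div_of_nonneg_right _ (by positivity)
          exact hG.trans (mul_le_mul_of_nonneg_left hxpow (le_of_lt hΓx))
      _ = ((k:ℝ) + 2) ^ (α/2 - 1) * s ^ (-(α/2)) * b k := by
          simp only [hb]
          push_cast
          have h2 : ((k:ℝ) + 2) ^ (α/2 - 1) = ((k:ℝ) + 2) ^ (α/2) / ((k:ℝ) + 2) := by
            rw [Real.rpow_sub (by positivity), Real.rpow_one]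
          rw [h2]
          field_simp
          rw [hx]
          ring_nf
  -- eventually the factor is ≤ 1/2
  have htend : Tendsto (fun k : ℕ => ((k:ℝ) + 2) ^ (α/2 - 1) * s ^ (-(α/2))) atTop (𝓝 0) := by
    have h1 : Tendsto (fun k : ℕ => ((k:ℝ) + 2) ^ (α/2 - 1)) atTop (𝓝 0) := by
      have h2 : Tendsto (fun k : ℕ => (k:ℝ) + 2) atTop atTop :=
        tendsto_atTop_add_const_right _ 2 tendsto_natCast_atTop_atTop
      exact (tendsto_rpow_neg_atTop (by linarith : 0 < 1 - α/2)).comp h2 |>.congr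
        (fun k => by rw [Function.comp_apply]; congr 1; ring)
    simpa using h1.mul_const (s ^ (-(α/2)))
  have hev : ∀ᶠ k : ℕ in atTop, ((k:ℝ) + 2) ^ (α/2 - 1) * s ^ (-(α/2)) ≤ 1/2 := by
    filter_upwards [htend.eventually (eventually_le_nhds (by norm_num : (0:ℝ) < 1/2))] with k hk
    exact hk
  filter_upwards [hev] with k hk
  rw [Real.norm_of_nonneg (le_of_lt (hbpos (k+1))), Real.norm_of_nonneg (le_of_lt (hbpos k))]
  calc b (k + 1) ≤ ((k:ℝ) + 2) ^ (α/2 - 1) * s ^ (-(α/2)) * b k := hratio k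
    _ ≤ 1/2 * b k := mul_le_mul_of_nonneg_right hk (le_of_lt (hbpos k))
end

section
/- For α ∈ (0,2), the function f_1 : (0,∞) → ℝ defined by f_1(s) = ∑_{k=1}^∞ γ_k s^{-kα/2-1} is infinitely differentiable on (0,∞), and for every nonnegative integer j and every s > 0 its j-th derivative is given by the absolutely convergent, termwise-differentiated series f_1^{(j)}(s) = ∑_{k=1}^∞ γ_k (-1)^j (Γ(kα/2+1+j)/Γ(kα/2+1)) s^{-kα/2-1-j}. -/
open Real MeasureTheory Set Filter Topology

/-- `f₁(s) = ∑_{k=1}^∞ γ_k s^{-kα/2-1}`. -/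
noncomputable def f1 (α : ℝ) (s : ℝ) : ℝ :=
  ∑' k : ℕ, gam α (k + 1) * s ^ (-((k : ℝ) + 1) * α / 2 - 1)

lemma gamma_interp {x θ : ℝ} (hx : 0 < x) (hθ : 0 < θ) (hθ1 : θ < 1) :
    Real.Gamma (x + θ) ≤ x ^ θ * Real.Gamma x := by
  have h := Real.Gamma_mul_add_mul_le_rpow_Gamma_mul_rpow_Gamma
    (s := x + 1) (t := x) (a := θ) (b := 1 - θ)
    (by linarith) hx hθ (by linarith) (by ring)
  have e1 : θ * (x + 1) + (1 - θ) * x = x + θ := by ring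
  rw [e1, Real.Gamma_add_one hx.ne'] at h
  have hΓ : 0 < Real.Gamma x := Real.Gamma_pos_of_pos hx
  calc Real.Gamma (x + θ) ≤ (x * Real.Gamma x) ^ θ * Real.Gamma x ^ (1 - θ) := h
    _ = x ^ θ * Real.Gamma x := by
        rw [Real.mul_rpow hx.le hΓ.le, mul_assoc, ← Real.rpow_add hΓ]
        norm_num

lemma sum_aux {θ a r : ℝ} (hθ : 0 < θ) (hθ1 : θ < 1) (ha : 1 ≤ a) (hr : 0 ≤ r) :
    Summable (fun m : ℕ => Real.Gamma (m * θ + a) / m.factorial * r ^ m) := by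
  apply summable_of_ratio_norm_eventually_le (r := 1/2) (by norm_num)
  have halim : Tendsto (fun m : ℕ => (θ + a) ^ θ * r * ((m : ℝ) + 1) ^ (θ - 1)) atTop (𝓝 0) := by
    have h1 : Tendsto (fun m : ℕ => ((m : ℝ) + 1) ^ (θ - 1)) atTop (𝓝 0) := by
      have := tendsto_rpow_neg_atTop (y := 1 - θ) (by linarith)
      have h2 : Tendsto (fun m : ℕ => (m : ℝ) + 1) atTop atTop :=
        tendsto_atTop_add_const_right _ _ tendsto_natCast_atTop_atTop
      have := this.comp h2
      simpa [Function.comp_def, neg_sub] using this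
    simpa using h1.const_mul ((θ + a) ^ θ * r)
  have hq : Tendsto (fun m : ℕ => ((m : ℝ) * θ + a) ^ θ * r / ((m : ℝ) + 1)) atTop (𝓝 0) := by
    apply squeeze_zero (g := fun m : ℕ => (θ + a) ^ θ * r * ((m : ℝ) + 1) ^ (θ - 1)) _ _ halim
    · intro m
      positivity
    · intro m
      have hm1 : (0:ℝ) < (m:ℝ) + 1 := by positivity
      have hb : (m : ℝ) * θ + a ≤ ((m : ℝ) + 1) * (θ + a) := by
        have : (0:ℝ) ≤ (m:ℝ) := Nat.cast_nonneg m
        nlinarith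
      have h3 : ((m : ℝ) * θ + a) ^ θ ≤ (((m : ℝ) + 1) * (θ + a)) ^ θ := by
        apply Real.rpow_le_rpow (by positivity) hb hθ.le
      have h4 : (((m : ℝ) + 1) * (θ + a)) ^ θ = ((m:ℝ)+1) ^ θ * (θ + a) ^ θ :=
        Real.mul_rpow (by positivity) (by linarith)
      rw [div_le_iff₀ hm1]
      have h5 : ((m:ℝ)+1) ^ (θ - 1) * ((m:ℝ)+1) = ((m:ℝ)+1) ^ θ := by
        rw [← Real.rpow_add_one hm1.ne']
        norm_num
      calc ((m : ℝ) * θ + a) ^ θ * r ≤ ((m:ℝ)+1) ^ θ * (θ + a) ^ θ * r := by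
            rw [← h4]; exact mul_le_mul_of_nonneg_right h3 hr
        _ = (θ + a) ^ θ * r * (((m:ℝ)+1) ^ (θ-1) * ((m:ℝ)+1)) := by rw [h5]; ring
        _ = (θ + a) ^ θ * r * ((m:ℝ)+1) ^ (θ-1) * ((m:ℝ)+1) := by ring
  filter_upwards [hq.eventually_lt_const (by norm_num : (0:ℝ) < 1/2)] with m hm
  have hx : (0:ℝ) < (m:ℝ) * θ + a := by positivity
  have hΓx : 0 < Real.Gamma ((m:ℝ) * θ + a) := Real.Gamma_pos_of_pos hx
  have key : Real.Gamma (((m:ℕ)+1 : ℕ) * θ + a) ≤ ((m:ℝ) * θ + a) ^ θ * Real.Gamma ((m:ℝ)*θ + a) := by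
    have : (((m:ℕ)+1 : ℕ) : ℝ) * θ + a = ((m:ℝ) * θ + a) + θ := by push_cast; ring
    rw [this]
    exact gamma_interp hx hθ hθ1
  have hfact : ((m+1 : ℕ).factorial : ℝ) = ((m:ℝ)+1) * (m.factorial : ℝ) := by
    rw [Nat.factorial_succ]; push_cast; ring
  have hb : ‖Real.Gamma (((m+1:ℕ)) * θ + a) / (m+1).factorial * r ^ (m+1)‖
      = Real.Gamma (((m+1:ℕ)) * θ + a) / (m+1).factorial * r ^ (m+1) := by
    apply abs_of_nonneg
    have : (0:ℝ) < ((m+1:ℕ):ℝ) * θ + a := by positivity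
    have := (Real.Gamma_pos_of_pos this).le
    positivity
  rw [hb, Real.norm_eq_abs, abs_of_nonneg (by positivity)]
  have hfp : (0:ℝ) < (m.factorial : ℝ) := by positivity
  calc Real.Gamma (((m+1:ℕ)) * θ + a) / (m+1).factorial * r ^ (m+1)
      ≤ (((m:ℝ) * θ + a) ^ θ * Real.Gamma ((m:ℝ)*θ + a)) / (((m:ℝ)+1) * m.factorial) * (r ^ m * r) := by
        rw [hfact, pow_succ]
        gcongr
    _ = (((m:ℝ) * θ + a) ^ θ * r / ((m:ℝ)+1)) * (Real.Gamma ((m:ℝ)*θ+a) / m.factorial * r ^ m) := by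
        field_simp
    _ ≤ 1/2 * (Real.Gamma ((m:ℝ)*θ+a) / m.factorial * r ^ m) := by
        apply mul_le_mul_of_nonneg_right hm.le
        positivity

/-! auxiliary definitions for derivatives -/

noncomputable def cc (α : ℝ) (k : ℕ) : ℝ := ((k : ℝ) + 1) * α / 2 + 1

noncomputable def AA (α : ℝ) (j k : ℕ) : ℝ :=
  (-1 : ℝ) ^ j * (Real.Gamma (cc α k + j) / Real.Gamma (cc α k))

noncomputable def FF (α : ℝ) (j : ℕ) (s : ℝ) : ℝ :=
  ∑' k : ℕ, gam α (k + 1) * AA α j k * s ^ (-cc α k - j)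

lemma cc_pos {α : ℝ} (hα : 0 < α) (k : ℕ) : 0 < cc α k := by
  have : (0:ℝ) ≤ (k:ℝ) := Nat.cast_nonneg k
  unfold cc; nlinarith

lemma cc_add_pos {α : ℝ} (hα : 0 < α) (k j : ℕ) : 0 < cc α k + j := by
  have := cc_pos hα k
  have : (0:ℝ) ≤ (j:ℝ) := Nat.cast_nonneg j
  positivity

lemma gam_abs {α : ℝ} (hα : 0 < α) (m : ℕ) :
    |gam α m| ≤ Real.Gamma ((m : ℝ) * α / 2 + 1) / (π * m.factorial) := by
  have hxpos : (0:ℝ) < (m:ℝ) * α / 2 + 1 := by positivity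
  have hΓ : 0 < Real.Gamma ((m : ℝ) * α / 2 + 1) := Real.Gamma_pos_of_pos hxpos
  have hden : (0:ℝ) < π * m.factorial := by positivity
  unfold gam
  rw [abs_mul, abs_div, abs_mul, abs_pow, abs_neg, abs_one, one_pow, one_mul,
    abs_of_nonneg hΓ.le, abs_of_nonneg hden.le]
  calc Real.Gamma ((m:ℝ)*α/2+1) / (π * m.factorial) * |Real.sin (π * m * α / 2)|
      ≤ Real.Gamma ((m:ℝ)*α/2+1) / (π * m.factorial) * 1 := by
        apply mul_le_mul_of_nonneg_left (Real.abs_sin_le_one _) (by positivity)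
    _ = _ := mul_one _

lemma term_bound {α : ℝ} (hα : 0 < α) (j k : ℕ) {s : ℝ} (hs : 0 < s) :
    |gam α (k + 1) * AA α j k * s ^ (-cc α k - j)| ≤
      Real.Gamma (cc α k + j) / (π * (k + 1).factorial) * s ^ (-cc α k - j) := by
  have hcc := cc_pos hα k
  have hΓc : 0 < Real.Gamma (cc α k) := Real.Gamma_pos_of_pos hcc
  have hΓcj : 0 < Real.Gamma (cc α k + j) := Real.Gamma_pos_of_pos (cc_add_pos hα k j)
  have hrp : 0 < s ^ (-cc α k - j) := Real.rpow_pos_of_pos hs _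
  have hAA : |AA α j k| = Real.Gamma (cc α k + j) / Real.Gamma (cc α k) := by
    unfold AA
    rw [abs_mul, abs_pow, abs_neg, abs_one, one_pow, one_mul, abs_div,
      abs_of_nonneg hΓcj.le, abs_of_nonneg hΓc.le]
  have hgam : |gam α (k+1)| ≤ Real.Gamma (cc α k) / (π * (k+1).factorial) := by
    have := gam_abs hα (k+1)
    have hc : ((k+1:ℕ):ℝ) * α / 2 + 1 = cc α k := by unfold cc; push_cast; ring
    rwa [hc] at this
  rw [abs_mul, abs_mul, hAA, abs_of_nonneg hrp.le]
  apply mul_le_mul_of_nonneg_right _ hrp.le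
  calc |gam α (k+1)| * (Real.Gamma (cc α k + j) / Real.Gamma (cc α k))
      ≤ Real.Gamma (cc α k) / (π * (k+1).factorial) * (Real.Gamma (cc α k + j) / Real.Gamma (cc α k)) := by
        apply mul_le_mul_of_nonneg_right hgam (by positivity)
    _ = Real.Gamma (cc α k + j) / (π * (k+1).factorial) := by
        field_simp

lemma maj_summable {α : ℝ} (hα : 0 < α) (hα2 : α < 2) (j : ℕ) {s : ℝ} (hs : 0 < s) :
    Summable (fun k : ℕ =>
      Real.Gamma (cc α k + j) / (π * (k + 1).factorial) * s ^ (-cc α k - j)) := by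
  have hθ : 0 < α / 2 := by linarith
  have hθ1 : α / 2 < 1 := by linarith
  have hr : (0:ℝ) ≤ s ^ (-(α/2)) := (Real.rpow_pos_of_pos hs _).le
  have base := sum_aux (θ := α/2) (a := 1 + j) (r := s ^ (-(α/2))) hθ hθ1
    (le_add_of_nonneg_right (Nat.cast_nonneg j)) hr
  have base2 := (base.mul_left ((1/π) * s ^ (-(1:ℝ) - j)))
  have base3 := (summable_nat_add_iff 1).mpr base2
  apply base3.congr
  intro k
  have h1 : ((k+1:ℕ):ℝ) * (α/2) + (1 + (j:ℝ)) = cc α k + j := by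
    unfold cc; push_cast; ring
  have h2 : (s ^ (-(α/2))) ^ (k+1) = s ^ (-(α/2) * ((k:ℝ)+1)) := by
    rw [← Real.rpow_natCast (s ^ (-(α/2))) (k+1), ← Real.rpow_mul hs.le]
    congr 1; push_cast; ring
  have h3 : s ^ (-(α/2) * ((k:ℝ)+1)) * s ^ (-(1:ℝ) - (j:ℝ)) = s ^ (-cc α k - j) := by
    rw [← Real.rpow_add hs]; congr 1; unfold cc; ring
  rw [h1, h2] at *
  calc (1/π) * s ^ (-(1:ℝ) - (j:ℝ)) *
        (Real.Gamma (cc α k + j) / ((k+1).factorial) * s ^ (-(α/2) * ((k:ℝ)+1)))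
      = Real.Gamma (cc α k + j) / (π * (k+1).factorial) *
          (s ^ (-(α/2) * ((k:ℝ)+1)) * s ^ (-(1:ℝ) - (j:ℝ))) := by
        field_simp
    _ = _ := by rw [h3]

lemma abs_summable {α : ℝ} (hα : 0 < α) (hα2 : α < 2) (j : ℕ) {s : ℝ} (hs : 0 < s) :
    Summable (fun k : ℕ => |gam α (k + 1) * AA α j k * s ^ (-cc α k - j)|) :=
  (maj_summable hα hα2 j hs).of_nonneg_of_le (fun _ => abs_nonneg _)
    (fun k => term_bound hα j k hs)

lemma AA_rec {α : ℝ} (hα : 0 < α) (j k : ℕ) :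
    AA α j k * (-cc α k - j) = AA α (j+1) k := by
  have hpos := cc_add_pos hα k j
  have hΓc : 0 < Real.Gamma (cc α k) := Real.Gamma_pos_of_pos (cc_pos hα k)
  have h1 : Real.Gamma (cc α k + ((j+1:ℕ):ℝ)) = (cc α k + j) * Real.Gamma (cc α k + j) := by
    have he : cc α k + ((j+1:ℕ):ℝ) = (cc α k + j) + 1 := by push_cast; ring
    rw [he, Real.Gamma_add_one hpos.ne']
  unfold AA
  rw [h1, pow_succ]
  field_simp
  ring

lemma hasDerivAt_term {α : ℝ} (hα : 0 < α) (j k : ℕ) {y : ℝ} (hy : 0 < y) :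
    HasDerivAt (fun z : ℝ => gam α (k + 1) * AA α j k * z ^ (-cc α k - j))
      (gam α (k + 1) * AA α (j+1) k * y ^ (-cc α k - ((j+1:ℕ):ℝ))) y := by
  have h := (Real.hasDerivAt_rpow_const (x := y) (p := -cc α k - j)
    (Or.inl hy.ne')).const_mul (gam α (k+1) * AA α j k)
  refine h.congr_deriv ?_
  have he : -cc α k - ((j+1:ℕ):ℝ) = (-cc α k - j) - 1 := by push_cast; ring
  rw [he, ← AA_rec hα j k]
  ring

lemma hasDerivAt_FF {α : ℝ} (hα : 0 < α) (hα2 : α < 2) (j : ℕ) {s : ℝ} (hs : 0 < s) :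
    HasDerivAt (FF α j) (FF α (j+1) s) s := by
  have hs2 : 0 < s / 2 := by linarith
  have h2 : s / 2 < s := by linarith
  have := hasDerivAt_tsum_of_isPreconnected
    (u := fun k : ℕ => Real.Gamma (cc α k + (j+1:ℕ)) / (π * (k + 1).factorial) *
      (s/2) ^ (-cc α k - (j+1:ℕ)))
    (g := fun k z => gam α (k + 1) * AA α j k * z ^ (-cc α k - j))
    (g' := fun k y => gam α (k + 1) * AA α (j+1) k * y ^ (-cc α k - ((j+1:ℕ):ℝ)))
    (t := Set.Ioi (s/2)) (y₀ := s) (y := s)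
    (maj_summable hα hα2 (j+1) hs2) isOpen_Ioi (convex_Ioi _).isPreconnected
    (fun k y hy => hasDerivAt_term hα j k (lt_trans hs2 hy))
    (fun k y hy => ?_) (mem_Ioi.2 h2) ((abs_summable hα hα2 j hs).of_abs) (mem_Ioi.2 h2)
  · exact this
  · have hy0 : 0 < y := lt_trans hs2 hy
    have hb := term_bound hα (j+1) k hy0
    refine hb.trans ?_
    have hΓcj : 0 < Real.Gamma (cc α k + (j+1:ℕ)) := Real.Gamma_pos_of_pos (cc_add_pos hα k (j+1))
    apply mul_le_mul_of_nonneg_left _ (by positivity)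
    apply Real.rpow_le_rpow_of_nonpos hs2 (le_of_lt hy)
    have h1 := cc_pos hα k
    have h2 : (0:ℝ) ≤ ((j+1:ℕ):ℝ) := Nat.cast_nonneg _
    linarith

lemma f1_eq_FF0 (α : ℝ) (hα : 0 < α) : f1 α = FF α 0 := by
  funext s
  unfold f1 FF
  apply tsum_congr
  intro k
  have hΓc : 0 < Real.Gamma (cc α k) := Real.Gamma_pos_of_pos (cc_pos hα k)
  have hA : AA α 0 k = 1 := by
    unfold AA
    simp [div_self hΓc.ne']
  have he : -((k:ℝ) + 1) * α / 2 - 1 = -cc α k - ((0:ℕ):ℝ) := by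
    unfold cc; push_cast; ring
  rw [hA, he, mul_one]

lemma iter_eq {α : ℝ} (hα : 0 < α) (hα2 : α < 2) :
    ∀ j : ℕ, ∀ s : ℝ, 0 < s → iteratedDeriv j (f1 α) s = FF α j s := by
  intro j
  induction j with
  | zero => intro s hs; rw [iteratedDeriv_zero, f1_eq_FF0 α hα]
  | succ j ih =>
    intro s hs
    rw [iteratedDeriv_succ]
    have hev : iteratedDeriv j (f1 α) =ᶠ[𝓝 s] FF α j := by
      filter_upwards [isOpen_Ioi.mem_nhds (mem_Ioi.2 hs)] with y hy using ih y hy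
    rw [hev.deriv_eq]
    exact (hasDerivAt_FF hα hα2 j hs).deriv

lemma gam_zero (α : ℝ) : gam α 0 = 0 := by simp [gam]

lemma gam_geom_summable {α : ℝ} (hα : 0 < α) (hα2 : α < 2) {r : ℝ} (hr : 0 ≤ r) :
    Summable (fun n : ℕ => |gam α n| * r ^ n) := by
  have base := (sum_aux (θ := α/2) (a := 1) (r := r) (by linarith) (by linarith)
    le_rfl hr).mul_left (1/π)
  apply Summable.of_nonneg_of_le (fun n => by positivity) _ base
  intro n
  have hg := gam_abs hα n
  have he : (n:ℝ) * (α/2) + 1 = (n:ℝ) * α / 2 + 1 := by ring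
  calc |gam α n| * r ^ n
      ≤ Real.Gamma ((n:ℝ) * α / 2 + 1) / (π * n.factorial) * r ^ n :=
        mul_le_mul_of_nonneg_right hg (pow_nonneg hr n)
    _ = 1/π * (Real.Gamma ((n:ℝ) * (α/2) + 1) / n.factorial * r ^ n) := by
        rw [he]; field_simp

noncomputable def pser (α : ℝ) : FormalMultilinearSeries ℝ ℝ ℝ :=
  FormalMultilinearSeries.ofScalars ℝ (gam α)

lemma pser_radius {α : ℝ} (hα : 0 < α) (hα2 : α < 2) : (pser α).radius = ⊤ := by
  apply FormalMultilinearSeries.radius_eq_top_of_summable_norm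
  intro r
  apply Summable.of_nonneg_of_le (fun n => by positivity)
    (fun n => ?_) (gam_geom_summable hα hα2 (r := (r:ℝ)) r.coe_nonneg)
  apply mul_le_mul_of_nonneg_right _ (pow_nonneg r.coe_nonneg n)
  rw [show |gam α n| = ‖gam α n‖ from rfl]
  exact le_of_eq (FormalMultilinearSeries.ofScalars_norm ℝ (gam α) n)

lemma pser_analyticAt {α : ℝ} (hα : 0 < α) (hα2 : α < 2) (t : ℝ) :
    AnalyticAt ℝ (pser α).sum t := by
  have hball := (pser α).hasFPowerSeriesOnBall (by rw [pser_radius hα hα2]; simp)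
  apply hball.analyticAt_of_mem
  rw [pser_radius hα hα2]
  exact edist_lt_top t 0

lemma pser_sum_eq (α : ℝ) (x : ℝ) : (pser α).sum x = ∑' n : ℕ, gam α n * x ^ n := by
  unfold FormalMultilinearSeries.sum
  apply tsum_congr
  intro n
  rw [pser, FormalMultilinearSeries.ofScalars_apply_eq]
  simp [smul_eq_mul]

lemma f1_repr {α : ℝ} (hα : 0 < α) (hα2 : α < 2) {y : ℝ} (hy : 0 < y) :
    f1 α y = (pser α).sum (y ^ (-(α/2))) * y ^ (-(1:ℝ)) := by
  set r := y ^ (-(α/2)) with hrdef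
  have hr : 0 ≤ r := (Real.rpow_pos_of_pos hy _).le
  have hsum : Summable (fun n : ℕ => gam α n * r ^ n * y ^ (-(1:ℝ))) := by
    apply Summable.of_abs
    apply Summable.of_nonneg_of_le (fun n => abs_nonneg _) (fun n => ?_)
      ((gam_geom_summable hα hα2 hr).mul_right (y ^ (-(1:ℝ))))
    rw [abs_mul, abs_mul, abs_of_nonneg (pow_nonneg hr n),
      abs_of_nonneg (Real.rpow_pos_of_pos hy _).le]
  rw [pser_sum_eq, ← tsum_mul_right]
  rw [Summable.tsum_eq_zero_add hsum]
  have h0 : gam α 0 * r ^ 0 * y ^ (-(1:ℝ)) = 0 := by rw [gam_zero]; ring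
  rw [h0, zero_add]
  unfold f1
  apply tsum_congr
  intro k
  have h2 : r ^ (k+1) = y ^ (-(α/2) * ((k:ℝ)+1)) := by
    rw [hrdef, ← Real.rpow_natCast (y ^ (-(α/2))) (k+1), ← Real.rpow_mul hy.le]
    congr 1; push_cast; ring
  rw [h2, mul_assoc, ← Real.rpow_add hy]
  congr 1
  ring

/-- `f₁` is infinitely differentiable on `(0,∞)`, and for every `j ≥ 0` and `s > 0` its
`j`-th derivative is given by the absolutely convergent, termwise-differentiated series
`f₁^{(j)}(s) = ∑_{k=1}^∞ γ_k (-1)^j (Γ(kα/2+1+j)/Γ(kα/2+1)) s^{-kα/2-1-j}`. -/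
theorem stmt1 (α : ℝ) (hα : α ∈ Set.Ioo (0 : ℝ) 2) :
    ContDiffOn ℝ (⊤ : ℕ∞) (f1 α) (Set.Ioi 0) ∧
      ∀ (j : ℕ) (s : ℝ), 0 < s →
        Summable (fun k : ℕ =>
          |gam α (k + 1) * (-1 : ℝ) ^ j *
            (Real.Gamma (((k : ℝ) + 1) * α / 2 + 1 + j) /
              Real.Gamma (((k : ℝ) + 1) * α / 2 + 1)) *
            s ^ (-((k : ℝ) + 1) * α / 2 - 1 - j)|) ∧
        iteratedDeriv j (f1 α) s =
          ∑' k : ℕ, gam α (k + 1) * (-1 : ℝ) ^ j *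
            (Real.Gamma (((k : ℝ) + 1) * α / 2 + 1 + j) /
              Real.Gamma (((k : ℝ) + 1) * α / 2 + 1)) *
            s ^ (-((k : ℝ) + 1) * α / 2 - 1 - j) := by
  obtain ⟨hα1, hα2⟩ := hα
  constructor
  · intro s hs
    have hs' : (0:ℝ) < s := hs
    have h1 : ContDiffAt ℝ (⊤ : ℕ∞) (fun y : ℝ => (pser α).sum (y ^ (-(α/2))) * y ^ (-(1:ℝ))) s := by
      have hcomp : ContDiffAt ℝ (⊤ : ℕ∞) (fun y : ℝ => (pser α).sum (y ^ (-(α/2)))) s :=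
        ((pser_analyticAt hα1 hα2 (s ^ (-(α/2)))).contDiffAt).comp s
          (Real.contDiffAt_rpow_const_of_ne hs'.ne')
      exact hcomp.mul (Real.contDiffAt_rpow_const_of_ne hs'.ne')
    have hev : f1 α =ᶠ[𝓝 s] (fun y : ℝ => (pser α).sum (y ^ (-(α/2))) * y ^ (-(1:ℝ))) := by
      filter_upwards [isOpen_Ioi.mem_nhds hs] with y hy using f1_repr hα1 hα2 hy
    exact (h1.congr_of_eventuallyEq hev).contDiffWithinAt
  · intro j s hs
    have hterm : ∀ k : ℕ,
        gam α (k + 1) * (-1 : ℝ) ^ j *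
          (Real.Gamma (((k : ℝ) + 1) * α / 2 + 1 + j) /
            Real.Gamma (((k : ℝ) + 1) * α / 2 + 1)) *
          s ^ (-((k : ℝ) + 1) * α / 2 - 1 - j)
        = gam α (k + 1) * AA α j k * s ^ (-cc α k - j) := by
      intro k
      have he : -((k:ℝ)+1)*α/2-1-(j:ℝ) = -cc α k - (j:ℝ) := by unfold cc; ring
      rw [he]
      unfold AA cc
      ring
    constructor
    · exact (abs_summable hα1 hα2 j hs).congr
        (fun k => congrArg abs (hterm k).symm)
    · rw [iter_eq hα1 hα2 j s hs]
      exact tsum_congr (fun k => (hterm k).symm)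
end

section
/- Let α ∈ (0,2), β = 2/α, q a nonnegative integer, and let a_0(q), …, a_q(q) be real constants that realize the scaling-derivative identity for exponent β. Then for every integer k with 0 ≤ k ≤ q, ∑_{j=0}^q a_j(q) (-1)^j Γ(kα/2+1+j)/Γ(kα/2+1) equals 0 if k < q and equals q! if k = q. -/
open Real MeasureTheory Set Filter Topology

/-- The constants `a_0(q), …, a_q(q)` realize the scaling-derivative identity for
exponent `β > 0` if for every `q`-times continuously differentiable `h : (0,∞) → ℝ`
and all `s, t > 0`,
`(∂^q/∂t^q)[t^{-β} h(t^{-β}s)] = ∑_{j=0}^q a_j(q) t^{-β-q} (t^{-β}s)^j h^{(j)}(t^{-β}s)`. -/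
def RealizesScalingDerivIdentity (β : ℝ) (q : ℕ) (a : ℕ → ℝ) : Prop :=
  ∀ h : ℝ → ℝ, ContDiffOn ℝ (q : ℕ∞) h (Set.Ioi 0) →
    ∀ s : ℝ, 0 < s → ∀ t : ℝ, 0 < t →
      iteratedDeriv q (fun u : ℝ => u ^ (-β) * h (u ^ (-β) * s)) t =
        ∑ j ∈ Finset.range (q + 1),
          a j * t ^ (-β - q) * (t ^ (-β) * s) ^ j * iteratedDeriv j h (t ^ (-β) * s)

lemma aux_iteratedDeriv_rpow (p : ℝ) (n : ℕ) :
    ∀ x : ℝ, 0 < x → iteratedDeriv n (fun u : ℝ => u ^ p) x =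
      (∏ i ∈ Finset.range n, (p - i)) * x ^ (p - n) := by
  induction n with
  | zero => intro x hx; simp
  | succ n ih =>
    intro x hx
    rw [iteratedDeriv_succ]
    have heq : iteratedDeriv n (fun u : ℝ => u ^ p) =ᶠ[𝓝 x]
        fun u => (∏ i ∈ Finset.range n, (p - i)) * u ^ (p - n) := by
      filter_upwards [Ioi_mem_nhds hx] with u hu
      exact ih u hu
    rw [heq.deriv_eq]
    have hd : HasDerivAt (fun u : ℝ => (∏ i ∈ Finset.range n, (p - i)) * u ^ (p - n))
        ((∏ i ∈ Finset.range n, (p - i)) * ((p - n) * x ^ (p - n - 1))) x :=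
      (Real.hasDerivAt_rpow_const (Or.inl hx.ne')).const_mul _
    rw [hd.deriv, Finset.prod_range_succ]
    push_cast
    rw [show p - (n + 1) = p - n - 1 by ring]
    ring

lemma aux_prod_sub : ∀ n : ℕ, ∏ i ∈ Finset.range n, (n - i) = n.factorial := by
  intro n
  induction n with
  | zero => simp
  | succ n ih =>
    rw [Finset.prod_range_succ']
    simp only [Nat.succ_sub_succ_eq_sub, Nat.sub_zero]
    rw [ih, Nat.factorial_succ]
    ring

lemma aux_Gamma_prod (y : ℝ) (hy : 0 < y) (j : ℕ) :
    Real.Gamma (y + j) = (∏ i ∈ Finset.range j, (y + i)) * Real.Gamma y := by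
  induction j with
  | zero => simp
  | succ j ih =>
    have h1 : y + (j + 1 : ℕ) = (y + j) + 1 := by push_cast; ring
    have h2 : (y : ℝ) + j ≠ 0 := by positivity
    rw [h1, Real.Gamma_add_one h2, ih, Finset.prod_range_succ]
    ring

/-- Let `α ∈ (0,2)`, `β = 2/α`, `q` a nonnegative integer, and let `a_0(q), …, a_q(q)`
realize the scaling-derivative identity for exponent `β`. Then for every `0 ≤ k ≤ q`,
`∑_{j=0}^q a_j(q) (-1)^j Γ(kα/2+1+j)/Γ(kα/2+1)` equals `0` if `k < q` and `q!` if `k = q`. -/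
theorem stmt5 (α : ℝ) (hα : α ∈ Set.Ioo (0 : ℝ) 2) (q : ℕ) (a : ℕ → ℝ)
    (ha : RealizesScalingDerivIdentity (2 / α) q a) :
    ∀ k : ℕ, k ≤ q →
      ∑ j ∈ Finset.range (q + 1),
          a j * (-1 : ℝ) ^ j *
            (Real.Gamma ((k : ℝ) * α / 2 + 1 + j) / Real.Gamma ((k : ℝ) * α / 2 + 1)) =
        if k < q then 0 else (q.factorial : ℝ) := by
  intro k hk
  have hα0 : (0 : ℝ) < α := hα.1
  set x : ℝ := (k : ℝ) * α / 2 with hxdef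
  have hx0 : 0 ≤ x := by positivity
  set c : ℝ := -(x + 1) with hcdef
  set h : ℝ → ℝ := fun u => u ^ c with hhdef
  have hcd : ContDiffOn ℝ (q : ℕ∞) h (Set.Ioi 0) := fun u hu =>
    (Real.contDiffAt_rpow_const_of_ne (ne_of_gt hu)).contDiffWithinAt
  have key := ha h hcd 1 one_pos 1 one_pos
  -- LHS of key
  have hexp : -(2 / α) + -(2 / α) * c = (k : ℝ) := by
    rw [hcdef, hxdef]; field_simp; ring
  have heq : (fun u : ℝ => u ^ (-(2 / α)) * h (u ^ (-(2 / α)) * 1)) =ᶠ[𝓝 (1 : ℝ)]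
      fun u : ℝ => u ^ (k : ℝ) := by
    filter_upwards [Ioi_mem_nhds (zero_lt_one : (0:ℝ) < 1)] with u hu
    have hu' : (0 : ℝ) < u := hu
    simp only [hhdef, mul_one]
    rw [← hexp, Real.rpow_add hu', ← Real.rpow_mul hu'.le]
  have hL : iteratedDeriv q (fun u : ℝ => u ^ (-(2 / α)) * h (u ^ (-(2 / α)) * 1)) 1 =
      ∏ i ∈ Finset.range q, ((k : ℝ) - i) := by
    rw [heq.iteratedDeriv_eq q, aux_iteratedDeriv_rpow _ q 1 one_pos, Real.one_rpow, mul_one]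
  -- RHS of key
  have hR : ∀ j ∈ Finset.range (q + 1),
      a j * (1:ℝ) ^ (-(2 / α) - q) * ((1:ℝ) ^ (-(2 / α)) * 1) ^ j *
        iteratedDeriv j h ((1:ℝ) ^ (-(2 / α)) * 1) =
      a j * ∏ i ∈ Finset.range j, (c - i) := by
    intro j _
    simp only [Real.one_rpow, one_mul, mul_one, one_pow, hhdef]
    rw [aux_iteratedDeriv_rpow c j 1 one_pos, Real.one_rpow]
    ring
  rw [hL, Finset.sum_congr rfl hR] at key
  -- rewrite goal terms
  have hterm : ∀ j : ℕ,
      a j * (-1 : ℝ) ^ j * (Real.Gamma (x + 1 + j) / Real.Gamma (x + 1)) =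
      a j * ∏ i ∈ Finset.range j, (c - i) := by
    intro j
    have hy : (0 : ℝ) < x + 1 := by linarith
    have hG : Real.Gamma (x + 1 + j) / Real.Gamma (x + 1) =
        ∏ i ∈ Finset.range j, (x + 1 + i) := by
      rw [aux_Gamma_prod (x + 1) hy j, mul_div_assoc,
        div_self (Real.Gamma_pos_of_pos hy).ne', mul_one]
    rw [hG]
    have : ∀ i : ℕ, c - i = (-1) * (x + 1 + i) := by intro i; rw [hcdef]; ring
    rw [Finset.prod_congr rfl fun i _ => this i, Finset.prod_mul_distrib,
      Finset.prod_const, Finset.card_range]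
    ring
  calc ∑ j ∈ Finset.range (q + 1),
        a j * (-1 : ℝ) ^ j * (Real.Gamma (x + 1 + j) / Real.Gamma (x + 1))
      = ∑ j ∈ Finset.range (q + 1), a j * ∏ i ∈ Finset.range j, (c - i) :=
        Finset.sum_congr rfl fun j _ => hterm j
    _ = ∏ i ∈ Finset.range q, ((k : ℝ) - i) := key.symm
    _ = if k < q then 0 else (q.factorial : ℝ) := by
        rcases lt_or_eq_of_le hk with hlt | hEq
        · rw [if_pos hlt]
          exact Finset.prod_eq_zero (Finset.mem_range.mpr hlt) (by simp)
        · rw [if_neg (by omega), hEq]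
          have : ∀ i ∈ Finset.range q, ((q : ℝ) - i) = ((q - i : ℕ) : ℝ) := by
            intro i hi
            rw [Nat.cast_sub (Finset.mem_range.mp hi).le]
          rw [Finset.prod_congr rfl this, ← Nat.cast_prod]
          congr 1
          exact aux_prod_sub q
end

section
/- Let m > 2 be an integer and α = 2/m (so 2/α = m). Then for all s > 0 and t > 0, (∂/∂s) f_t(s) = (-1)^m (∂^m/∂t^m) f_t(s); that is, (∂/∂s − (-1)^m ∂^m/∂t^m) f_t(s) = 0. -/
open Real MeasureTheory Set Filter Topology

/-- `f_t(s) = t^{-2/α} f₁(t^{-2/α} s)`. -/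
noncomputable def ft (α t s : ℝ) : ℝ :=
  t ^ (-2 / α) * f1 α (t ^ (-2 / α) * s)

lemma gamma_le_rpow_factorial (n : ℕ) (l : ℝ) (hl0 : 0 ≤ l) (hl1 : l ≤ 1) :
    Real.Gamma (l * n + 1) ≤ ((n.factorial : ℝ)) ^ l := by
  have hpos : (0:ℝ) < l * n + 1 := by positivity
  have hmem1 : ((n:ℝ) + 1) ∈ Ioi (0:ℝ) := mem_Ioi.mpr (by positivity)
  have hmem2 : (1:ℝ) ∈ Ioi (0:ℝ) := mem_Ioi.mpr one_pos
  have hconv := Real.convexOn_log_Gamma.2 hmem1 hmem2 hl0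
    (by linarith : (0:ℝ) ≤ 1 - l) (by ring)
  simp only [Function.comp_apply, smul_eq_mul] at hconv
  have harg : l * ((n:ℝ) + 1) + (1 - l) * (1:ℝ) = l * n + 1 := by ring
  rw [harg, Real.Gamma_one, Real.log_one, mul_zero, add_zero] at hconv
  rw [Real.Gamma_nat_eq_factorial] at hconv
  have hΓpos : 0 < Real.Gamma (l * n + 1) := Real.Gamma_pos_of_pos hpos
  have hfac : (0:ℝ) < (n.factorial : ℝ) := by positivity
  calc Real.Gamma (l * n + 1) = Real.exp (Real.log (Real.Gamma (l * n + 1))) :=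
        (Real.exp_log hΓpos).symm
    _ ≤ Real.exp (l * Real.log (n.factorial)) := Real.exp_le_exp.mpr hconv
    _ = (n.factorial : ℝ) ^ l := by rw [← Real.log_rpow hfac, Real.exp_log (by positivity)]

lemma gam_abs_le (α : ℝ) (hα0 : 0 < α) (hα1 : α ≤ 1) (n : ℕ) :
    |gam α n| ≤ ((n.factorial : ℝ)) ^ (-(1:ℝ)/2) / π := by
  have hfac1 : (1:ℝ) ≤ (n.factorial : ℝ) := by
    exact_mod_cast Nat.one_le_iff_ne_zero.mpr (Nat.factorial_ne_zero n)
  have hΓ : Real.Gamma ((n:ℝ) * α / 2 + 1) ≤ (n.factorial : ℝ) ^ (α/2) := by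
    have := gamma_le_rpow_factorial n (α/2) (by linarith) (by linarith)
    calc Real.Gamma ((n:ℝ) * α / 2 + 1) = Real.Gamma ((α/2) * n + 1) := by ring_nf
      _ ≤ (n.factorial : ℝ) ^ (α/2) := this
  have hΓpos : 0 < Real.Gamma ((n:ℝ) * α / 2 + 1) := Real.Gamma_pos_of_pos (by positivity)
  have h2 : (n.factorial : ℝ) ^ (α/2) ≤ (n.factorial : ℝ) ^ ((1:ℝ)/2) :=
    Real.rpow_le_rpow_of_exponent_le hfac1 (by linarith)
  have habs : |gam α n| ≤ Real.Gamma ((n:ℝ) * α / 2 + 1) / (π * n.factorial) := by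
    unfold gam
    rw [abs_mul, abs_div, abs_mul, abs_pow, abs_neg, abs_one, one_pow, one_mul]
    rw [abs_of_pos hΓpos, abs_mul, abs_of_pos Real.pi_pos, abs_of_pos (by positivity :
      (0:ℝ) < (n.factorial:ℝ))]
    have := abs_sin_le_one (π * n * α / 2)
    calc Real.Gamma ((n:ℝ) * α / 2 + 1) / (π * n.factorial) * |Real.sin (π * n * α / 2)|
        ≤ Real.Gamma ((n:ℝ) * α / 2 + 1) / (π * n.factorial) * 1 := by
          apply mul_le_mul_of_nonneg_left this (by positivity)
      _ = _ := by ring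
  refine habs.trans ?_
  rw [div_le_div_iff₀ (by positivity) Real.pi_pos]
  calc Real.Gamma ((n:ℝ) * α / 2 + 1) * π ≤ (n.factorial : ℝ) ^ ((1:ℝ)/2) * π := by
        apply mul_le_mul_of_nonneg_right (hΓ.trans h2) Real.pi_pos.le
    _ = (n.factorial : ℝ) ^ (-(1:ℝ)/2) * (π * n.factorial) := by
        rw [show (-(1:ℝ)/2) = (1:ℝ)/2 - 1 by norm_num, Real.rpow_sub (by linarith),
          Real.rpow_one]
        field_simp

/-- Master summability: `∑ (n!)^{-1/2} (n+1)^j c^n < ∞`. -/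
lemma master_summable (j : ℕ) (c : ℝ) (hc : 0 < c) :
    Summable (fun n : ℕ => ((n.factorial : ℝ)) ^ (-(1:ℝ)/2) * ((n:ℝ)+1)^j * c^n) := by
  apply summable_of_ratio_norm_eventually_le (r := 1/2) (by norm_num)
  filter_upwards [eventually_ge_atTop (Nat.ceil ((2^(j+1) * c)^2))] with n hn
  have hfac : (0:ℝ) < (n.factorial : ℝ) := by positivity
  have hn1 : (0:ℝ) < (n:ℝ) + 1 := by positivity
  have key : ((n:ℝ)+1) ^ (-(1:ℝ)/2) * 2^j * c ≤ 1/2 := by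
    have h1 : (2:ℝ)^(j+1) * c ≤ ((n:ℝ)+1) ^ ((1:ℝ)/2) := by
      have h2 : ((2^(j+1) * c)^2 : ℝ) ≤ (n:ℝ) + 1 := by
        calc ((2^(j+1) * c)^2 : ℝ) ≤ (Nat.ceil ((2^(j+1) * c)^2) : ℝ) := Nat.le_ceil _
          _ ≤ (n:ℝ) := by exact_mod_cast hn
          _ ≤ (n:ℝ) + 1 := by linarith
      calc (2:ℝ)^(j+1) * c = (((2^(j+1) * c)^2 : ℝ)) ^ ((1:ℝ)/2) := by
            rw [← Real.rpow_natCast _ 2, ← Real.rpow_mul (by positivity)]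
            norm_num
          _ ≤ ((n:ℝ)+1) ^ ((1:ℝ)/2) := Real.rpow_le_rpow (by positivity) h2 (by norm_num)
    have h3 : ((n:ℝ)+1) ^ (-(1:ℝ)/2) = (((n:ℝ)+1) ^ ((1:ℝ)/2))⁻¹ := by
      rw [← Real.rpow_neg hn1.le]; norm_num
    have h4 : (0:ℝ) < ((n:ℝ)+1) ^ ((1:ℝ)/2) := by positivity
    rw [h3]
    have h5 := mul_le_mul_of_nonneg_right h1 (inv_pos.mpr h4).le
    rw [mul_inv_cancel₀ h4.ne'] at h5
    rw [pow_succ] at h5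
    ring_nf at h5 ⊢
    linarith
  have hterm : ∀ k : ℕ, (0:ℝ) ≤ ((k.factorial : ℝ)) ^ (-(1:ℝ)/2) * ((k:ℝ)+1)^j * c^k := by
    intro k; positivity
  rw [Real.norm_eq_abs, Real.norm_eq_abs, abs_of_nonneg (hterm _), abs_of_nonneg (hterm _)]
  have hfs : ((n+1).factorial : ℝ) ^ (-(1:ℝ)/2)
      = ((n.factorial : ℝ)) ^ (-(1:ℝ)/2) * (((n:ℝ)+1)) ^ (-(1:ℝ)/2) := by
    rw [Nat.factorial_succ, Nat.cast_mul, Real.mul_rpow (by positivity) (by positivity)]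
    push_cast; ring
  have hpow : ((n:ℝ)+1+1)^j ≤ 2^j * ((n:ℝ)+1)^j := by
    rw [← mul_pow]
    apply pow_le_pow_left₀ (by positivity)
    linarith
  push_cast
  rw [hfs]
  calc (n.factorial : ℝ) ^ (-(1:ℝ)/2) * ((n:ℝ)+1) ^ (-(1:ℝ)/2) * ((n:ℝ)+1+1)^j * c^(n+1)
      ≤ (n.factorial : ℝ) ^ (-(1:ℝ)/2) * ((n:ℝ)+1) ^ (-(1:ℝ)/2) * (2^j * ((n:ℝ)+1)^j) * c^(n+1) := by
        apply mul_le_mul_of_nonneg_right _ (by positivity)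
        apply mul_le_mul_of_nonneg_left hpow (by positivity)
    _ = (((n:ℝ)+1) ^ (-(1:ℝ)/2) * 2^j * c) * ((n.factorial : ℝ) ^ (-(1:ℝ)/2) * ((n:ℝ)+1)^j * c^n) := by
        ring
    _ ≤ (1/2) * ((n.factorial : ℝ) ^ (-(1:ℝ)/2) * ((n:ℝ)+1)^j * c^n) :=
        mul_le_mul_of_nonneg_right key (hterm n)

/-- Comparison helper with index shift. -/
lemma summable_of_le_shift (j : ℕ) (C c : ℝ) (hc : 0 < c) {f : ℕ → ℝ}
    (hf : ∀ k : ℕ, |f k| ≤ C * (((k+1).factorial : ℝ) ^ (-(1:ℝ)/2) * ((k:ℝ)+2)^j * c^(k+1))) :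
    Summable f := by
  have h1 := (master_summable j c hc).mul_left C
  apply Summable.of_norm_bounded ((summable_nat_add_iff 1).mpr h1)
  intro k
  rw [Real.norm_eq_abs]
  refine (hf k).trans (le_of_eq ?_)
  push_cast; ring

/-- Series representation of `ft` as a power series in `t`. -/
lemma ft_eq_tsum (m : ℕ) (hm : 2 < m) (α : ℝ) (hα : α = 2 / m)
    (t x : ℝ) (ht : 0 < t) (hx : 0 < x) :
    ft α t x = ∑' k : ℕ,
      gam α (k+1) * x ^ (-((k:ℝ)+1) * α / 2 - 1) * t^(k+1) := by
  have hm0 : ((m:ℝ)) ≠ 0 := by positivity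
  have hexp : -2 / α = -(m:ℝ) := by rw [hα]; field_simp
  have htm : (0:ℝ) < t ^ (-(m:ℝ)) := Real.rpow_pos_of_pos ht _
  rw [ft, f1, hexp, ← tsum_mul_left]
  apply tsum_congr
  intro k
  have h1 : (t ^ (-(m:ℝ)) * x) ^ (-((k:ℝ)+1) * α / 2 - 1)
      = (t ^ (-(m:ℝ))) ^ (-((k:ℝ)+1) * α / 2 - 1) * x ^ (-((k:ℝ)+1) * α / 2 - 1) :=
    Real.mul_rpow htm.le hx.le
  have h2 : (t ^ (-(m:ℝ))) ^ (-((k:ℝ)+1) * α / 2 - 1)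
      = t ^ ((-(m:ℝ)) * (-((k:ℝ)+1) * α / 2 - 1)) := (Real.rpow_mul ht.le _ _).symm
  have h3 : t ^ (-(m:ℝ)) * t ^ ((-(m:ℝ)) * (-((k:ℝ)+1) * α / 2 - 1))
      = t ^ ((-(m:ℝ)) + (-(m:ℝ)) * (-((k:ℝ)+1) * α / 2 - 1)) := (Real.rpow_add ht _ _).symm
  have h4 : (-(m:ℝ)) + (-(m:ℝ)) * (-((k:ℝ)+1) * α / 2 - 1) = ((k+1 : ℕ) : ℝ) := by
    rw [hα]; push_cast; field_simp; ring
  rw [h1, h2, ← Real.rpow_natCast t (k+1), ← h4, ← h3]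
  ring

lemma rpow_split (α s r : ℝ) (hs : 0 < s) (k : ℕ) :
    s ^ (-((k:ℝ)+1) * α / 2 + r) = s ^ r * (s ^ (-α/2))^(k+1) := by
  rw [← Real.rpow_natCast (s ^ (-α/2)) (k+1), ← Real.rpow_mul hs.le, ← Real.rpow_add hs]
  congr 1; push_cast; ring

set_option maxHeartbeats 1000000 in
lemma deriv_s_eq (m : ℕ) (hm : 2 < m) (α : ℝ) (hα : α = 2 / m)
    (s : ℝ) (hs : 0 < s) (t : ℝ) (ht : 0 < t) :
    deriv (fun s' : ℝ => ft α t s') s = ∑' k : ℕ,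
      gam α (k+1) * ((-((k:ℝ)+1) * α / 2 - 1) * s ^ (-((k:ℝ)+1) * α / 2 - 1 - 1)) * t^(k+1) := by
  have hmR : (3:ℝ) ≤ (m:ℝ) := by exact_mod_cast hm
  have hα0 : 0 < α := by rw [hα]; positivity
  have hα1 : α ≤ 1 := by rw [hα, div_le_one (by linarith)]; linarith
  have heq : (fun s' : ℝ => ft α t s') =ᶠ[𝓝 s]
      (fun x : ℝ => ∑' k : ℕ, gam α (k+1) * x ^ (-((k:ℝ)+1) * α / 2 - 1) * t^(k+1)) := by
    filter_upwards [Ioi_mem_nhds hs] with x hx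
    exact ft_eq_tsum m hm α hα t x ht hx
  rw [heq.deriv_eq]
  refine HasDerivAt.deriv ?_
  set a : ℝ := s / 2 with ha_def
  have ha : 0 < a := by positivity
  set c : ℝ := a ^ (-α/2) * t with hc_def
  have hc : 0 < c := by positivity
  set C : ℝ := a ^ (-(2:ℝ)) / π with hC_def
  have hC : 0 < C := by
    apply div_pos (Real.rpow_pos_of_pos ha _) Real.pi_pos
  have key_bound : ∀ (k : ℕ) (y : ℝ), y ∈ Ioi a →
      |gam α (k+1) * ((-((k:ℝ)+1) * α / 2 - 1) * y ^ (-((k:ℝ)+1) * α / 2 - 1 - 1)) * t^(k+1)|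
        ≤ C * (((k+1).factorial : ℝ) ^ (-(1:ℝ)/2) * ((k:ℝ)+2)^1 * c^(k+1)) := by
    intro k y hy
    have hy0 : 0 < y := lt_trans ha hy
    have hexp_neg : -((k:ℝ)+1) * α / 2 - 1 - 1 ≤ 0 := by
      have : 0 ≤ ((k:ℝ)+1) * α / 2 := by positivity
      nlinarith
    have hyb : y ^ (-((k:ℝ)+1) * α / 2 - 1 - 1) ≤ a ^ (-((k:ℝ)+1) * α / 2 - 1 - 1) :=
      Real.rpow_le_rpow_of_nonpos ha (le_of_lt hy) hexp_neg
    have hsplit : a ^ (-((k:ℝ)+1) * α / 2 - 1 - 1)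
        = a ^ (-(2:ℝ)) * (a ^ (-α/2))^(k+1) := by
      rw [show -((k:ℝ)+1) * α / 2 - 1 - 1 = -((k:ℝ)+1) * α / 2 + (-(2:ℝ)) by ring]
      exact rpow_split α a _ ha k
    have he_abs : |(-((k:ℝ)+1) * α / 2 - 1)| ≤ (k:ℝ)+2 := by
      rw [abs_of_nonpos (by nlinarith [hα0.le, (by positivity : (0:ℝ) ≤ ((k:ℝ)+1) * α / 2)])]
      have : ((k:ℝ)+1) * α / 2 ≤ ((k:ℝ)+1) := by nlinarith [(by positivity : (0:ℝ) < (k:ℝ)+1)]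
      nlinarith
    have hgam := gam_abs_le α hα0 hα1 (k+1)
    have hy_pos : (0:ℝ) ≤ y ^ (-((k:ℝ)+1) * α / 2 - 1 - 1) := (Real.rpow_pos_of_pos hy0 _).le
    rw [abs_mul, abs_mul, abs_mul, abs_of_nonneg hy_pos, abs_of_nonneg (by positivity :
      (0:ℝ) ≤ t^(k+1))]
    calc |gam α (k+1)| * (|(-((k:ℝ)+1) * α / 2 - 1)| * y ^ (-((k:ℝ)+1) * α / 2 - 1 - 1)) * t^(k+1)
        ≤ (((k+1).factorial : ℝ) ^ (-(1:ℝ)/2) / π) * ((((k:ℝ)+2)) *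
            (a ^ (-(2:ℝ)) * (a ^ (-α/2))^(k+1))) * t^(k+1) := by
          apply mul_le_mul_of_nonneg_right _ (by positivity)
          apply mul_le_mul hgam _ (by positivity) (by positivity)
          apply mul_le_mul he_abs (hyb.trans_eq hsplit) hy_pos (by positivity)
      _ = C * (((k+1).factorial : ℝ) ^ (-(1:ℝ)/2) * ((k:ℝ)+2)^1 * c^(k+1)) := by
          rw [hC_def, hc_def, mul_pow]; ring
  have hu : Summable (fun k : ℕ => C * (((k+1).factorial : ℝ) ^ (-(1:ℝ)/2) * ((k:ℝ)+2)^1 * c^(k+1))) := by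
    apply summable_of_le_shift 1 C c hc
    intro k
    rw [abs_of_nonneg (by positivity)]
  have hg0 : Summable (fun k : ℕ => gam α (k+1) * s ^ (-((k:ℝ)+1) * α / 2 - 1) * t^(k+1)) := by
    apply summable_of_le_shift 0 (s ^ (-(1:ℝ)) / π) (s ^ (-α/2) * t) (by positivity)
    intro k
    have hsplit : s ^ (-((k:ℝ)+1) * α / 2 - 1) = s ^ (-(1:ℝ)) * (s ^ (-α/2))^(k+1) := by
      rw [show -((k:ℝ)+1) * α / 2 - 1 = -((k:ℝ)+1) * α / 2 + (-(1:ℝ)) by ring]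
      exact rpow_split α s _ hs k
    rw [abs_mul, abs_mul, abs_of_nonneg (by positivity : (0:ℝ) ≤ s ^ (-((k:ℝ)+1) * α / 2 - 1)),
      abs_of_nonneg (by positivity : (0:ℝ) ≤ t^(k+1)), hsplit]
    calc |gam α (k+1)| * (s ^ (-(1:ℝ)) * (s ^ (-α/2))^(k+1)) * t^(k+1)
        ≤ (((k+1).factorial : ℝ) ^ (-(1:ℝ)/2) / π) * (s ^ (-(1:ℝ)) * (s ^ (-α/2))^(k+1)) * t^(k+1) := by
          apply mul_le_mul_of_nonneg_right _ (by positivity)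
          exact mul_le_mul_of_nonneg_right (gam_abs_le α hα0 hα1 (k+1)) (by positivity)
      _ = (s ^ (-(1:ℝ)) / π) * (((k+1).factorial : ℝ) ^ (-(1:ℝ)/2) * ((k:ℝ)+2)^0 * (s ^ (-α/2) * t)^(k+1)) := by
          rw [mul_pow]; ring
  have hmem : s ∈ Ioi a := by simpa [ha_def] using half_lt_self hs
  refine hasDerivAt_tsum_of_isPreconnected (𝕜 := ℝ) (F := ℝ)
    (g := fun (k:ℕ) (x:ℝ) => gam α (k+1) * x ^ (-((k:ℝ)+1) * α / 2 - 1) * t^(k+1))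
    (g' := fun (k:ℕ) (y:ℝ) => gam α (k+1) * ((-((k:ℝ)+1) * α / 2 - 1)
      * y ^ (-((k:ℝ)+1) * α / 2 - 1 - 1)) * t^(k+1))
    hu isOpen_Ioi isPreconnected_Ioi ?_ key_bound hmem hg0 hmem
  intro k y hy
  have hy0 : 0 < y := lt_trans ha hy
  exact ((Real.hasDerivAt_rpow_const (p := -((k:ℝ)+1) * α / 2 - 1)
    (Or.inl hy0.ne')).const_mul (gam α (k+1))).mul_const (t^(k+1))

set_option maxHeartbeats 1000000 in
lemma iter_deriv_t (m : ℕ) (hm : 2 < m) (α : ℝ) (hα : α = 2 / m)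
    (s : ℝ) (hs : 0 < s) (j : ℕ) :
    ∀ u : ℝ, 0 < u → iteratedDeriv j (fun u' : ℝ => ft α u' s) u
      = ∑' k : ℕ, gam α (k+1) * s ^ (-((k:ℝ)+1) * α / 2 - 1)
          * ((k+1).descFactorial j : ℝ) * u^(k+1-j) := by
  have hmR : (3:ℝ) ≤ (m:ℝ) := by exact_mod_cast hm
  have hα0 : 0 < α := by rw [hα]; positivity
  have hα1 : α ≤ 1 := by rw [hα, div_le_one (by linarith)]; linarith
  have hb : ∀ k : ℕ, |gam α (k+1) * s ^ (-((k:ℝ)+1) * α / 2 - 1)|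
      ≤ (s ^ (-(1:ℝ)) / π) * (((k+1).factorial : ℝ) ^ (-(1:ℝ)/2) * (s ^ (-α/2))^(k+1)) := by
    intro k
    have hsplit : s ^ (-((k:ℝ)+1) * α / 2 - 1) = s ^ (-(1:ℝ)) * (s ^ (-α/2))^(k+1) := by
      rw [show -((k:ℝ)+1) * α / 2 - 1 = -((k:ℝ)+1) * α / 2 + (-(1:ℝ)) by ring]
      exact rpow_split α s _ hs k
    rw [abs_mul, abs_of_nonneg (by positivity : (0:ℝ) ≤ s ^ (-((k:ℝ)+1) * α / 2 - 1)), hsplit]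
    calc |gam α (k+1)| * (s ^ (-(1:ℝ)) * (s ^ (-α/2))^(k+1))
        ≤ (((k+1).factorial : ℝ) ^ (-(1:ℝ)/2) / π) * (s ^ (-(1:ℝ)) * (s ^ (-α/2))^(k+1)) :=
          mul_le_mul_of_nonneg_right (gam_abs_le α hα0 hα1 (k+1)) (by positivity)
      _ = _ := by ring
  induction j with
  | zero =>
    intro u hu
    rw [iteratedDeriv_zero, ft_eq_tsum m hm α hα u s hu hs]
    exact tsum_congr fun k => by simp
  | succ j ih =>
    intro u hu
    rw [iteratedDeriv_succ]
    have heq : iteratedDeriv j (fun u' : ℝ => ft α u' s) =ᶠ[𝓝 u]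
        (fun x : ℝ => ∑' k : ℕ, gam α (k+1) * s ^ (-((k:ℝ)+1) * α / 2 - 1)
          * ((k+1).descFactorial j : ℝ) * x^(k+1-j)) := by
      filter_upwards [Ioi_mem_nhds hu] with x hx
      exact ih x hx
    rw [heq.deriv_eq]
    refine HasDerivAt.deriv ?_
    set c : ℝ := s ^ (-α/2) * (u+1) with hc_def
    have hc : 0 < c := by positivity
    set C : ℝ := s ^ (-(1:ℝ)) / π with hC_def
    have hC : 0 < C := by positivity
    have gen_bound : ∀ (i : ℕ), i ≤ j+1 → ∀ (k : ℕ) (y : ℝ), y ∈ Ioo (0:ℝ) (u+1) →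
        |gam α (k+1) * s ^ (-((k:ℝ)+1) * α / 2 - 1)
            * ((k+1).descFactorial i : ℝ) * y^(k+1-i)|
          ≤ C * (((k+1).factorial : ℝ) ^ (-(1:ℝ)/2) * ((k:ℝ)+2)^(j+1) * c^(k+1)) := by
      intro i hi k y hy
      have hdesc : (((k+1).descFactorial i : ℕ) : ℝ) ≤ ((k:ℝ)+2)^(j+1) := by
        calc (((k+1).descFactorial i : ℕ) : ℝ) ≤ (((k+1)^i : ℕ) : ℝ) := by
              exact_mod_cast Nat.descFactorial_le_pow (k+1) i
          _ ≤ ((k:ℝ)+2)^i := by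
              push_cast
              exact pow_le_pow_left₀ (by positivity) (by linarith) i
          _ ≤ ((k:ℝ)+2)^(j+1) := pow_le_pow_right₀ (by linarith) hi
      have hypow : y^(k+1-i) ≤ (u+1)^(k+1) := by
        calc y^(k+1-i) ≤ (u+1)^(k+1-i) := pow_le_pow_left₀ hy.1.le hy.2.le _
          _ ≤ (u+1)^(k+1) := pow_le_pow_right₀ (by linarith) (by omega)
      have hd0 : (0:ℝ) ≤ (((k+1).descFactorial i : ℕ) : ℝ) := Nat.cast_nonneg _
      have hy0 : (0:ℝ) ≤ y^(k+1-i) := pow_nonneg hy.1.le _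
      rw [abs_mul, abs_mul, abs_of_nonneg hd0, abs_of_nonneg hy0]
      calc |gam α (k+1) * s ^ (-((k:ℝ)+1) * α / 2 - 1)| * (((k+1).descFactorial i : ℕ) : ℝ)
            * y^(k+1-i)
          ≤ ((s ^ (-(1:ℝ)) / π) * (((k+1).factorial : ℝ) ^ (-(1:ℝ)/2) * (s ^ (-α/2))^(k+1)))
            * (((k:ℝ)+2)^(j+1)) * ((u+1)^(k+1)) := by
            apply mul_le_mul _ hypow hy0 _
            · exact mul_le_mul (hb k) hdesc hd0 (mul_nonneg hC.le (by positivity))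
            · have h1 : (0:ℝ) ≤ s ^ (-(1:ℝ)) / π := by positivity
              have h2 : (0:ℝ) ≤ (((k+1).factorial : ℝ) ^ (-(1:ℝ)/2) * (s ^ (-α/2))^(k+1)) := by
                positivity
              positivity
        _ = C * (((k+1).factorial : ℝ) ^ (-(1:ℝ)/2) * ((k:ℝ)+2)^(j+1) * c^(k+1)) := by
            rw [hC_def, hc_def, mul_pow]; ring
    have key_bound := gen_bound (j+1) le_rfl

    have hu_sum : Summable (fun k : ℕ =>
        C * (((k+1).factorial : ℝ) ^ (-(1:ℝ)/2) * ((k:ℝ)+2)^(j+1) * c^(k+1))) := by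
      apply summable_of_le_shift (j+1) C c hc
      intro k
      rw [abs_of_nonneg (by positivity)]
    have hmem : u ∈ Ioo (0:ℝ) (u+1) := ⟨hu, by linarith⟩
    have hg0 : Summable (fun k : ℕ => gam α (k+1) * s ^ (-((k:ℝ)+1) * α / 2 - 1)
        * ((k+1).descFactorial j : ℝ) * u^(k+1-j)) := by
      apply summable_of_le_shift (j+1) C c hc
      intro k
      exact gen_bound j (Nat.le_succ j) k u hmem
    refine hasDerivAt_tsum_of_isPreconnected (𝕜 := ℝ) (F := ℝ)
      (g := fun (k:ℕ) (x:ℝ) => gam α (k+1) * s ^ (-((k:ℝ)+1) * α / 2 - 1)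
        * ((k+1).descFactorial j : ℝ) * x^(k+1-j))
      (g' := fun (k:ℕ) (y:ℝ) => gam α (k+1) * s ^ (-((k:ℝ)+1) * α / 2 - 1)
        * ((k+1).descFactorial (j+1) : ℝ) * y^(k+1-(j+1)))
      hu_sum isOpen_Ioo isPreconnected_Ioo ?_ key_bound hmem hg0 hmem
    intro k y hy
    have h := (hasDerivAt_pow (k+1-j) y).const_mul
      (gam α (k+1) * s ^ (-((k:ℝ)+1) * α / 2 - 1) * ((k+1).descFactorial j : ℝ))
    have hval : (gam α (k+1) * s ^ (-((k:ℝ)+1) * α / 2 - 1) * ((k+1).descFactorial j : ℝ))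
        * (((k+1-j:ℕ):ℝ) * y^(k+1-j-1))
        = gam α (k+1) * s ^ (-((k:ℝ)+1) * α / 2 - 1)
            * ((k+1).descFactorial (j+1) : ℝ) * y^(k+1-(j+1)) := by
      rw [Nat.descFactorial_succ]
      push_cast [Nat.sub_sub]
      ring
    rw [hval] at h
    exact h


lemma key_id (m : ℕ) (hm : 2 < m) (α : ℝ) (hα : α = 2 / m) (k : ℕ) :
    gam α (k+1) * (-((k:ℝ)+1) * α / 2 - 1)
      = (-1:ℝ)^m * gam α (k+m+1) * ((k+m+1).descFactorial m : ℝ) := by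
  have hmR : (3:ℝ) ≤ (m:ℝ) := by exact_mod_cast hm
  have hm0 : ((m:ℝ)) ≠ 0 := by positivity
  have hα0 : 0 < α := by rw [hα]; positivity
  have e1 : ((k+m+1:ℕ):ℝ) * α / 2 + 1 = (((k+1:ℕ):ℝ) * α / 2 + 1) + 1 := by
    rw [hα]; push_cast; field_simp; ring
  have e2 : Real.Gamma ((((k+1:ℕ):ℝ) * α / 2 + 1) + 1)
      = (((k+1:ℕ):ℝ) * α / 2 + 1) * Real.Gamma (((k+1:ℕ):ℝ) * α / 2 + 1) := by
    apply Real.Gamma_add_one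
    have : (0:ℝ) < ((k+1:ℕ):ℝ) * α / 2 + 1 := by positivity
    exact this.ne'
  have hsin : Real.sin (π * ((k+m+1:ℕ):ℝ) * α / 2)
      = - Real.sin (π * ((k+1:ℕ):ℝ) * α / 2) := by
    rw [show π * ((k+m+1:ℕ):ℝ) * α / 2 = π * ((k+1:ℕ):ℝ) * α / 2 + π by
      rw [hα]; push_cast; field_simp; ring]
    exact Real.sin_add_pi _
  have hfact : ((k+1).factorial : ℝ) * ((k+m+1).descFactorial m : ℝ)
      = ((k+m+1).factorial : ℝ) := by
    have h := Nat.factorial_mul_descFactorial (show m ≤ k+m+1 by omega)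
    rw [show k+m+1-m = k+1 by omega] at h
    exact_mod_cast h
  have hsgn : ((-1:ℝ))^m * ((-1:ℝ))^(k+m+1+1) = ((-1:ℝ))^(k+1+1) := by
    rw [← pow_add, show m+(k+m+1+1) = (k+1+1)+2*m by ring, pow_add, pow_mul,
      neg_one_sq, one_pow, mul_one]
  have hπ : (π:ℝ) ≠ 0 := Real.pi_ne_zero
  have hF1 : ((k+1).factorial : ℝ) ≠ 0 := by positivity
  have hF2 : ((k+m+1).factorial : ℝ) ≠ 0 := by positivity
  rw [gam, gam, e1, e2, hsin]
  have hcast : -((k:ℝ)+1) * α / 2 - 1 = -(((k+1:ℕ):ℝ) * α / 2 + 1) := by push_cast; ring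
  rw [hcast]
  set G := Real.Gamma (((k+1:ℕ):ℝ) * α / 2 + 1) with hG
  set S := Real.sin (π * ((k+1:ℕ):ℝ) * α / 2) with hS
  set X := ((k+1:ℕ):ℝ) * α / 2 with hX
  set P1 := ((-1:ℝ))^(k+1+1) with hP1
  set P2 := ((-1:ℝ))^(k+m+1+1) with hP2
  set Pm := ((-1:ℝ))^m with hPm
  set F1 := ((k+1).factorial : ℝ) with hF1d
  set F2 := ((k+m+1).factorial : ℝ) with hF2d
  set D := ((k+m+1).descFactorial m : ℝ) with hD
  field_simp
  have h2m : ((-1:ℝ))^(m*2) = 1 := by rw [mul_comm, pow_mul, neg_one_sq, one_pow]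
  linear_combination ((X+1)*G*S*π*F2)*hsgn + ((X+1)*G*S*π*Pm*P2)*hfact
    - (G*S*(-1:ℝ)^k*(π-1)*(X+1))*hfact
    - (G*S*(-1:ℝ)^k*(π-1)*(X+1)*F1*D)*h2m

/-- Let `m > 2` be an integer and `α = 2/m`. Then for all `s > 0` and `t > 0`,
`(∂/∂s) f_t(s) = (-1)^m (∂^m/∂t^m) f_t(s)`. -/
theorem stmt8 (m : ℕ) (hm : 2 < m) (α : ℝ) (hα : α = 2 / m)
    (s : ℝ) (hs : 0 < s) (t : ℝ) (ht : 0 < t) :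
    deriv (fun s' : ℝ => ft α t s') s =
      (-1 : ℝ) ^ m * iteratedDeriv m (fun u : ℝ => ft α u s) t := by
  have hmR : (3:ℝ) ≤ (m:ℝ) := by exact_mod_cast hm
  have hm0 : ((m:ℝ)) ≠ 0 := by positivity
  rw [deriv_s_eq m hm α hα s hs t ht, iter_deriv_t m hm α hα s hs m t ht]
  have hzero : ∀ n : ℕ, n < m →
      gam α (n+1) * s ^ (-((n:ℝ)+1) * α / 2 - 1) * ((n+1).descFactorial m : ℝ) * t^(n+1-m) = 0 := by
    intro n hn
    by_cases h : n + 1 = m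
    · have hgam : gam α (n+1) = 0 := by
        rw [gam, h]
        have : π * (m:ℝ) * α / 2 = π := by rw [hα]; field_simp
        rw [this, Real.sin_pi, mul_zero]
      rw [hgam, zero_mul, zero_mul, zero_mul]
    · have hd : (n+1).descFactorial m = 0 :=
        Nat.descFactorial_eq_zero_iff_lt.mpr (by omega)
      rw [hd, Nat.cast_zero, mul_zero, zero_mul]
  have hshift : (∑' n : ℕ, gam α (n+1) * s ^ (-((n:ℝ)+1) * α / 2 - 1)
        * ((n+1).descFactorial m : ℝ) * t^(n+1-m))
      = ∑' k : ℕ, gam α ((k+m)+1) * s ^ (-((↑(k+m):ℝ)+1) * α / 2 - 1)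
        * (((k+m)+1).descFactorial m : ℝ) * t^((k+m)+1-m) := by
    refine (Function.Injective.tsum_eq (add_left_injective m) ?_).symm
    intro n hn
    rcases lt_or_ge n m with h | h
    · exact absurd (hzero n h) hn
    · exact ⟨n - m, by simpa using Nat.sub_add_cancel h⟩
  rw [hshift, ← tsum_mul_left]
  apply tsum_congr
  intro k
  have hexp : -((↑(k+m):ℝ)+1) * α / 2 - 1 = -((k:ℝ)+1) * α / 2 - 1 - 1 := by
    rw [hα]; push_cast; field_simp; ring
  rw [hexp, show (k+m)+1-m = k+1 by omega, show (k+m)+1 = k+m+1 by omega]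
  linear_combination (s ^ (-((k:ℝ)+1) * α / 2 - 1 - 1) * t^(k+1)) * key_id m hm α hα k
end

section
/- Let m > 2 be an integer, α = 2/m, d ≥ 1, let D ⊆ ℝ^d be a bounded open set, let x ∈ D, let q be a positive integer, and let a_0(q), …, a_q(q) be real constants realizing the scaling-derivative identity for exponent 2/α. Then for every M > 1 there exists β(q,M) > 0, with β(q,M) → 0 as M → ∞, such that sup_{0<t≤1} sup_{y ∈ D^c} | t^{-q−2/α} ∑_{j=0}^q a_j(q) ∫_{M t^{2/α}}^∞ s^j g(s,x,y) (∂^j/∂s^j)( ∑_{k=q+1}^∞ γ_k (t^{-2/α}s)^{-kα/2−1} ) ds | ≤ β(q,M). -/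
open Real MeasureTheory Set Filter Topology

/-- The Gaussian kernel `g(s,x,y) = (4πs)^{-d/2} exp(-|x-y|²/(4s))`. -/
noncomputable def gauss (d : ℕ) (s : ℝ) (x y : EuclideanSpace ℝ (Fin d)) : ℝ :=
  (4 * π * s) ^ (-(d : ℝ) / 2) * Real.exp (-‖x - y‖ ^ 2 / (4 * s))

lemma gamma_conv_bound (k : ℕ) (hk : 1 ≤ k) (θ : ℝ) (h0 : 0 ≤ θ) (h1 : θ ≤ 1) :
    Real.Gamma (θ * k + 1) ≤ k.factorial := by
  have h1' : (1:ℝ) ∈ Set.Ioi (0:ℝ) := by norm_num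
  have h2' : ((k:ℝ) + 1) ∈ Set.Ioi (0:ℝ) := by simp; positivity
  have := Real.convexOn_Gamma.2 h1' h2' (by linarith : (0:ℝ) ≤ 1 - θ) h0 (by ring)
  rw [smul_eq_mul, smul_eq_mul, smul_eq_mul, smul_eq_mul] at this
  have he : (1 - θ) * 1 + θ * ((k:ℝ) + 1) = θ * k + 1 := by ring
  rw [he, Real.Gamma_one, Real.Gamma_nat_eq_factorial] at this
  have hf : (1:ℝ) ≤ k.factorial := by exact_mod_cast Nat.one_le_iff_ne_zero.2 k.factorial_ne_zero
  nlinarith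


lemma gam_bound (α : ℝ) (h0 : 0 ≤ α) (h2 : α ≤ 2) (k : ℕ) (hk : 1 ≤ k) :
    |gam α k| ≤ 1 / π := by
  have hπ : (0:ℝ) < π := Real.pi_pos
  have hf : (1:ℝ) ≤ k.factorial := by exact_mod_cast Nat.one_le_iff_ne_zero.2 k.factorial_ne_zero
  have hΓpos : 0 < Real.Gamma ((k:ℝ) * α / 2 + 1) := Real.Gamma_pos_of_pos (by positivity)
  have hΓ : Real.Gamma ((k:ℝ) * α / 2 + 1) ≤ k.factorial := by
    have := gamma_conv_bound k hk (α/2) (by linarith) (by linarith)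
    have he : α / 2 * k = (k:ℝ) * α / 2 := by ring
    rwa [he] at this
  have hsin : |Real.sin (π * k * α / 2)| ≤ 1 := Real.abs_sin_le_one _
  rw [gam, abs_mul, abs_div, abs_mul, abs_pow, abs_neg, abs_one, one_pow, one_mul,
    abs_of_pos hΓpos, abs_of_pos (by positivity : (0:ℝ) < π * k.factorial)]
  calc Real.Gamma ((k:ℝ)*α/2+1) / (π * k.factorial) * |Real.sin (π * k * α / 2)|
      ≤ Real.Gamma ((k:ℝ)*α/2+1) / (π * k.factorial) * 1 := by
        apply mul_le_mul_of_nonneg_left hsin (by positivity)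
    _ ≤ 1/π := by
        rw [mul_one, div_le_div_iff₀ (by positivity) hπ]
        calc Real.Gamma ((k:ℝ)*α/2+1) * π ≤ (k.factorial:ℝ) * π := by
              apply mul_le_mul_of_nonneg_right hΓ hπ.le
          _ = 1 * (π * k.factorial) := by ring

lemma exp_neg_bound (r z : ℝ) (hr : 0 ≤ r) (hz : 0 < z) :
    Real.exp (-z) ≤ (Nat.ceil r).factorial * z ^ (-r) := by
  set N := Nat.ceil r with hN
  have hfac : (1:ℝ) ≤ N.factorial := by exact_mod_cast Nat.one_le_iff_ne_zero.2 N.factorial_ne_zero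
  have key : z ^ r ≤ N.factorial * Real.exp z := by
    rcases le_or_gt 1 z with h1 | h1
    · have h2 : z ^ r ≤ z ^ (N:ℝ) := Real.rpow_le_rpow_of_exponent_le h1 (Nat.le_ceil r)
      have h3 : z ^ (N:ℝ) = z ^ N := Real.rpow_natCast z N
      have h4 : z ^ N / N.factorial ≤ Real.exp z := by
        calc z ^ N / N.factorial ≤ ∑ i ∈ Finset.range (N+1), z ^ i / i.factorial := by
              apply Finset.single_le_sum (f := fun i => z ^ i / (i.factorial:ℝ))
                (fun i _ => by positivity) (Finset.self_mem_range_succ N)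
          _ ≤ Real.exp z := Real.sum_le_exp_of_nonneg hz.le _
      rw [div_le_iff₀ (by positivity)] at h4
      calc z ^ r ≤ z ^ (N:ℝ) := h2
        _ = z ^ N := h3
        _ ≤ Real.exp z * N.factorial := h4
        _ = N.factorial * Real.exp z := by ring
    · have h2 : z ^ r ≤ 1 := Real.rpow_le_one hz.le h1.le hr
      have h3 : (1:ℝ) ≤ Real.exp z := by nlinarith [Real.add_one_le_exp z]
      nlinarith
  rw [Real.exp_neg, Real.rpow_neg hz.le]
  rw [inv_eq_one_div, inv_eq_one_div, mul_one_div, div_le_div_iff₀ (Real.exp_pos z) (by positivity)]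
  linarith [key]


lemma summable_poly_geo (q : ℕ) (b r : ℝ) (hb : 0 ≤ b) (hr0 : 0 ≤ r) (hr1 : r < 1) :
    Summable (fun ℓ : ℕ => ((ℓ : ℝ) + b) ^ q * r ^ ℓ) := by
  have hs1 : Summable (fun ℓ : ℕ => (2:ℝ)^q * ((ℓ:ℝ)^q * r^ℓ) + (2:ℝ)^q * (b^q * r^ℓ)) := by
    apply Summable.add
    · exact (summable_pow_mul_geometric_of_norm_lt_one (R := ℝ) q (by rwa [Real.norm_eq_abs, abs_of_nonneg hr0])).mul_left _
    · exact ((summable_geometric_of_lt_one hr0 hr1).mul_left _).mul_left _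
  apply Summable.of_nonneg_of_le (fun ℓ => by positivity) (fun ℓ => ?_) hs1
  have h1 : ((ℓ:ℝ) + b) ^ q ≤ (2:ℝ)^q * ((ℓ:ℝ)^q + b^q) := by
    have hmax : ((ℓ:ℝ) + b) ≤ 2 * max (ℓ:ℝ) b := by
      rcases le_total (ℓ:ℝ) b with h | h
      · rw [max_eq_right h]; linarith
      · rw [max_eq_left h]; linarith
    calc ((ℓ:ℝ) + b) ^ q ≤ (2 * max (ℓ:ℝ) b) ^ q := by
          apply pow_le_pow_left₀ (by positivity) hmax
      _ = 2^q * (max (ℓ:ℝ) b)^q := mul_pow 2 _ q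
      _ ≤ 2^q * ((ℓ:ℝ)^q + b^q) := by
          apply mul_le_mul_of_nonneg_left _ (by positivity)
          rcases le_total (ℓ:ℝ) b with h | h
          · rw [max_eq_right h]; nlinarith [pow_nonneg (Nat.cast_nonneg ℓ : (0:ℝ) ≤ ℓ) q]
          · rw [max_eq_left h]; nlinarith [pow_nonneg hb q]
  calc ((ℓ:ℝ) + b) ^ q * r ^ ℓ ≤ (2:ℝ)^q * ((ℓ:ℝ)^q + b^q) * r^ℓ := by
        apply mul_le_mul_of_nonneg_right h1 (by positivity)
    _ = (2:ℝ)^q * ((ℓ:ℝ)^q * r^ℓ) + (2:ℝ)^q * (b^q * r^ℓ) := by ring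

lemma term_bound_s15 (α mR : ℝ) (hmR : 1 ≤ mR) (hα : α = 2 / mR)
    (q j : ℕ) (hj : j ≤ q) (c M s : ℝ) (hc : 0 < c) (hM : 1 < M) (hMs : M ≤ c * s)
    (hs : 0 < s) (ℓ : ℕ) :
    |gam α (ℓ + q + 1) * c ^ (-((ℓ : ℝ) + q + 1) * α / 2 - 1) *
        (∏ i ∈ Finset.range j, (-((ℓ : ℝ) + q + 1) * α / 2 - 1 - (i : ℝ))) *
        s ^ (-((ℓ : ℝ) + q + 1) * α / 2 - 1 - (j : ℝ))|
      ≤ ((1 / π) * ((c * s) ^ (-((0 : ℝ) + q + 1) * α / 2 - 1) * s ^ (-(j : ℝ)))) *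
        (((ℓ : ℝ) + (2 * q + 2)) ^ q * (M ^ (-(1 : ℝ) / mR)) ^ ℓ) := by
  have hmR0 : (0:ℝ) < mR := by linarith
  have hα0 : 0 ≤ α := by rw [hα]; positivity
  have hα2 : α ≤ 2 := by rw [hα, div_le_iff₀ hmR0]; linarith
  have hcs : 0 < c * s := by positivity
  have hM0 : (0:ℝ) < M := by linarith
  set P : ℝ := -((ℓ : ℝ) + q + 1) * α / 2 - 1 with hP
  set P0 : ℝ := -((0 : ℝ) + q + 1) * α / 2 - 1 with hP0
  -- rewrite the power part
  have e2 : c ^ P * s ^ (P - (j : ℝ)) =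
      ((c * s) ^ P0 * s ^ (-(j : ℝ))) * (c * s) ^ (-(ℓ : ℝ) / mR) := by
    have h1 : P - (j : ℝ) = P + (-(j : ℝ)) := by ring
    have h2 : P = P0 + (-(ℓ : ℝ) / mR) := by
      rw [hP, hP0, hα]; field_simp; ring
    rw [h1, Real.rpow_add hs, ← mul_assoc]
    rw [show c ^ P * s ^ P = (c * s) ^ P from (Real.mul_rpow hc.le hs.le).symm]
    rw [h2, Real.rpow_add hcs]
    ring
  -- bound on the product of falling factors
  have hfall : |∏ i ∈ Finset.range j, (P - (i : ℝ))| ≤ ((ℓ : ℝ) + (2 * q + 2)) ^ q := by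
    rw [Finset.abs_prod]
    have hbase : (1:ℝ) ≤ (ℓ : ℝ) + (2 * q + 2) := by
      have h1 : (0:ℝ) ≤ (ℓ:ℝ) := Nat.cast_nonneg ℓ
      have h2 : (0:ℝ) ≤ (q:ℝ) := Nat.cast_nonneg q
      linarith
    calc ∏ i ∈ Finset.range j, |P - (i : ℝ)|
        ≤ ∏ i ∈ Finset.range j, ((ℓ : ℝ) + (2 * q + 2)) := by
          apply Finset.prod_le_prod (fun i _ => abs_nonneg _)
          intro i hi
          have hi' : (i : ℝ) ≤ (q : ℝ) - 1 := by
            have : i + 1 ≤ q := le_trans (Finset.mem_range.mp hi) hj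
            have : (i:ℝ) + 1 ≤ (q:ℝ) := by exact_mod_cast this
            linarith
          have hquot : ((ℓ : ℝ) + q + 1) * α / 2 ≤ (ℓ : ℝ) + q + 1 := by
            have h0 : (0:ℝ) ≤ (ℓ : ℝ) + q + 1 := by positivity
            nlinarith
          have hPneg : P - (i : ℝ) ≤ 0 := by
            rw [hP]
            have : 0 ≤ ((ℓ : ℝ) + q + 1) * α / 2 := by positivity
            have : (0:ℝ) ≤ (i:ℝ) := by positivity
            linarith
          rw [abs_of_nonpos hPneg, hP]
          push_cast
          linarith
      _ = ((ℓ : ℝ) + (2 * q + 2)) ^ j := by rw [Finset.prod_const, Finset.card_range]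
      _ ≤ ((ℓ : ℝ) + (2 * q + 2)) ^ q := pow_le_pow_right₀ hbase hj
  -- bound on (c*s)^{-ℓ/mR}
  have hgeo : (c * s) ^ (-(ℓ : ℝ) / mR) ≤ (M ^ (-(1 : ℝ) / mR)) ^ ℓ := by
    have hexp : -(ℓ : ℝ) / mR ≤ 0 :=
      div_nonpos_of_nonpos_of_nonneg (by simp) hmR0.le
    have h1 : (c * s) ^ (-(ℓ : ℝ) / mR) ≤ M ^ (-(ℓ : ℝ) / mR) :=
      Real.rpow_le_rpow_of_nonpos hM0 hMs hexp
    have h2 : M ^ (-(ℓ : ℝ) / mR) = (M ^ (-(1 : ℝ) / mR)) ^ ℓ := by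
      rw [← Real.rpow_natCast (M ^ (-(1 : ℝ) / mR)) ℓ, ← Real.rpow_mul hM0.le]
      congr 1
      ring
    linarith
  -- assemble
  have habs : |gam α (ℓ + q + 1)| ≤ 1 / π := by
    apply gam_bound α hα0 hα2 _ (by omega)
  have e1 : |gam α (ℓ + q + 1) * c ^ P * (∏ i ∈ Finset.range j, (P - (i : ℝ))) *
      s ^ (P - (j : ℝ))| =
      |gam α (ℓ + q + 1)| * |∏ i ∈ Finset.range j, (P - (i : ℝ))| *
        (c ^ P * s ^ (P - (j : ℝ))) := by
    rw [abs_mul, abs_mul, abs_mul, abs_of_pos (Real.rpow_pos_of_pos hc _),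
      abs_of_pos (Real.rpow_pos_of_pos hs _)]
    ring
  rw [e1, e2]
  have hmid : (0:ℝ) ≤ (c * s) ^ P0 * s ^ (-(j : ℝ)) := by positivity
  calc |gam α (ℓ + q + 1)| * |∏ i ∈ Finset.range j, (P - (i : ℝ))| *
        ((c * s) ^ P0 * s ^ (-(j : ℝ)) * (c * s) ^ (-(ℓ : ℝ) / mR))
      ≤ (1 / π) * (((ℓ : ℝ) + (2 * q + 2)) ^ q) *
        ((c * s) ^ P0 * s ^ (-(j : ℝ)) * ((M ^ (-(1 : ℝ) / mR)) ^ ℓ)) := by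
        gcongr
        all_goals first
          | exact abs_nonneg _
          | exact Real.rpow_nonneg hcs.le _
          | exact habs
          | exact hfall
          | exact hgeo
          | positivity
    _ = ((1 / π) * ((c * s) ^ P0 * s ^ (-(j : ℝ)))) *
        (((ℓ : ℝ) + (2 * q + 2)) ^ q * (M ^ (-(1 : ℝ) / mR)) ^ ℓ) := by ring

section main
variable (α mR : ℝ) (q : ℕ) (c A M : ℝ)

/-- uniform bound constant -/
noncomputable def ub (j : ℕ) (ℓ : ℕ) : ℝ :=
  ((1 / π) * (M ^ (-((0 : ℝ) + q + 1) * α / 2 - 1) * A ^ (-(j : ℝ)))) *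
    (((ℓ : ℝ) + (2 * q + 2)) ^ q * (M ^ (-(1 : ℝ) / mR)) ^ ℓ)

variable (hmR : 1 ≤ mR) (hα : α = 2 / mR) (hc : 0 < c) (hA : 0 < A) (hM : 1 < M)
  (hMA : M ≤ c * A)

include hmR hα hc hA hM hMA in
lemma term_le_ub (j : ℕ) (hj : j ≤ q) (s : ℝ) (hs : s ∈ Set.Ioi A) (ℓ : ℕ) :
    |gam α (ℓ + q + 1) * c ^ (-((ℓ : ℝ) + q + 1) * α / 2 - 1) *
        (∏ i ∈ Finset.range j, (-((ℓ : ℝ) + q + 1) * α / 2 - 1 - (i : ℝ))) *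
        s ^ (-((ℓ : ℝ) + q + 1) * α / 2 - 1 - (j : ℝ))|
      ≤ ub α mR q A M j ℓ := by
  have hmR0 : (0:ℝ) < mR := by linarith
  have hsA : A < s := hs
  have hs0 : 0 < s := lt_trans hA hsA
  have hM0 : (0:ℝ) < M := by linarith
  have hMs : M ≤ c * s := le_trans hMA (by nlinarith)
  have hP0 : -((0 : ℝ) + q + 1) * α / 2 - 1 ≤ 0 := by
    have h1 : 0 ≤ ((0:ℝ) + q + 1) * α / 2 := by
      rw [hα]; positivity
    linarith
  refine le_trans (term_bound_s15 α mR hmR hα q j hj c M s hc hM hMs hs0 ℓ) ?_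
  rw [ub]
  refine mul_le_mul_of_nonneg_right ?_ (by positivity)
  refine mul_le_mul_of_nonneg_left ?_ (by positivity)
  refine mul_le_mul (Real.rpow_le_rpow_of_nonpos hM0 hMs hP0)
    (Real.rpow_le_rpow_of_nonpos hA hsA.le (by
      apply neg_nonpos_of_nonneg; positivity))
    (Real.rpow_nonneg (by positivity) _) (Real.rpow_nonneg hM0.le _)

include hmR hα hc hA hM hMA in
lemma ub_summable (j : ℕ) : Summable (ub α mR q A M j) := by
  apply Summable.mul_left
  apply summable_poly_geo q (2 * q + 2) _ (by positivity) (Real.rpow_nonneg (by linarith) _)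
  exact Real.rpow_lt_one_of_one_lt_of_neg hM (by
    apply div_neg_of_neg_of_pos (by norm_num) (by linarith))

include hmR hα hc hA hM hMA in
lemma summable_abs_G (j : ℕ) (hj : j ≤ q) (s : ℝ) (hs : s ∈ Set.Ioi A) :
    Summable (fun ℓ : ℕ => |gam α (ℓ + q + 1) * c ^ (-((ℓ : ℝ) + q + 1) * α / 2 - 1) *
        (∏ i ∈ Finset.range j, (-((ℓ : ℝ) + q + 1) * α / 2 - 1 - (i : ℝ))) *
        s ^ (-((ℓ : ℝ) + q + 1) * α / 2 - 1 - (j : ℝ))|) := by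
  apply Summable.of_nonneg_of_le (fun ℓ => abs_nonneg _)
    (fun ℓ => term_le_ub α mR q c A M hmR hα hc hA hM hMA j hj s hs ℓ)
    (ub_summable α mR q c A M hmR hα hc hA hM hMA j)

include hmR hα hc hA hM hMA in
lemma iter_deriv_eq (j : ℕ) (hj : j ≤ q) :
    ∀ s ∈ Set.Ioi A,
      iteratedDeriv j (fun s' : ℝ => ∑' ℓ : ℕ,
          gam α (ℓ + q + 1) * (c * s') ^ (-((ℓ : ℝ) + q + 1) * α / 2 - 1)) s
        = ∑' ℓ : ℕ, gam α (ℓ + q + 1) * c ^ (-((ℓ : ℝ) + q + 1) * α / 2 - 1) *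
            (∏ i ∈ Finset.range j, (-((ℓ : ℝ) + q + 1) * α / 2 - 1 - (i : ℝ))) *
            s ^ (-((ℓ : ℝ) + q + 1) * α / 2 - 1 - (j : ℝ)) := by
  induction j with
  | zero =>
    intro s hs
    have hs0 : 0 < s := lt_trans hA hs
    rw [iteratedDeriv_zero]
    apply tsum_congr
    intro ℓ
    rw [Real.mul_rpow hc.le hs0.le]
    rw [Finset.range_zero, Finset.prod_empty, mul_one, Nat.cast_zero, sub_zero]
    ring
  | succ j ih =>
    intro s hs
    have hj' : j ≤ q := by omega
    have hev : iteratedDeriv j (fun s' : ℝ => ∑' ℓ : ℕ,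
        gam α (ℓ + q + 1) * (c * s') ^ (-((ℓ : ℝ) + q + 1) * α / 2 - 1)) =ᶠ[nhds s]
        (fun z : ℝ => ∑' ℓ : ℕ, gam α (ℓ + q + 1) * c ^ (-((ℓ : ℝ) + q + 1) * α / 2 - 1) *
            (∏ i ∈ Finset.range j, (-((ℓ : ℝ) + q + 1) * α / 2 - 1 - (i : ℝ))) *
            z ^ (-((ℓ : ℝ) + q + 1) * α / 2 - 1 - (j : ℝ))) :=
      Filter.eventuallyEq_of_mem (isOpen_Ioi.mem_nhds hs) (fun z hz => ih hj' z hz)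
    rw [iteratedDeriv_succ, hev.deriv_eq]
    have hder : HasDerivAt (fun z : ℝ => ∑' ℓ : ℕ,
        gam α (ℓ + q + 1) * c ^ (-((ℓ : ℝ) + q + 1) * α / 2 - 1) *
            (∏ i ∈ Finset.range j, (-((ℓ : ℝ) + q + 1) * α / 2 - 1 - (i : ℝ))) *
            z ^ (-((ℓ : ℝ) + q + 1) * α / 2 - 1 - (j : ℝ)))
        (∑' ℓ : ℕ, gam α (ℓ + q + 1) * c ^ (-((ℓ : ℝ) + q + 1) * α / 2 - 1) *
            (∏ i ∈ Finset.range j, (-((ℓ : ℝ) + q + 1) * α / 2 - 1 - (i : ℝ))) *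
            ((-((ℓ : ℝ) + q + 1) * α / 2 - 1 - (j : ℝ)) *
              s ^ (-((ℓ : ℝ) + q + 1) * α / 2 - 1 - (j : ℝ) - 1))) s := by
      refine hasDerivAt_tsum_of_isPreconnected
        (g := fun (ℓ : ℕ) (z : ℝ) => gam α (ℓ + q + 1) * c ^ (-((ℓ : ℝ) + q + 1) * α / 2 - 1) *
            (∏ i ∈ Finset.range j, (-((ℓ : ℝ) + q + 1) * α / 2 - 1 - (i : ℝ))) *
            z ^ (-((ℓ : ℝ) + q + 1) * α / 2 - 1 - (j : ℝ)))
        (g' := fun (ℓ : ℕ) (y : ℝ) => gam α (ℓ + q + 1) * c ^ (-((ℓ : ℝ) + q + 1) * α / 2 - 1) *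
            (∏ i ∈ Finset.range j, (-((ℓ : ℝ) + q + 1) * α / 2 - 1 - (i : ℝ))) *
            ((-((ℓ : ℝ) + q + 1) * α / 2 - 1 - (j : ℝ)) *
              y ^ (-((ℓ : ℝ) + q + 1) * α / 2 - 1 - (j : ℝ) - 1)))
        (ub_summable α mR q c A M hmR hα hc hA hM hMA (j + 1))
        isOpen_Ioi isPreconnected_Ioi
        (fun ℓ y hy => ?_) (fun ℓ y hy => ?_) hs
        (Summable.of_abs (summable_abs_G α mR q c A M hmR hα hc hA hM hMA j hj' s hs)) hs
      · -- HasDerivAt of each term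
        have hy0 : 0 < y := lt_trans hA hy
        exact (Real.hasDerivAt_rpow_const (Or.inl hy0.ne')).const_mul _
      · -- norm bound
        have hy0 : 0 < y := lt_trans hA hy
        have key := term_le_ub α mR q c A M hmR hα hc hA hM hMA (j+1) hj y hy ℓ
        rw [Real.norm_eq_abs]
        refine le_trans (le_of_eq ?_) key
        rw [Finset.prod_range_succ]
        have he : -((ℓ : ℝ) + q + 1) * α / 2 - 1 - (j : ℝ) - 1
            = -((ℓ : ℝ) + q + 1) * α / 2 - 1 - ((j : ℕ) + 1 : ℕ) := by
          push_cast; ring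
        beta_reduce
        rw [he]
        congr 1
        ring
    rw [hder.deriv]
    apply tsum_congr
    intro ℓ
    rw [Finset.prod_range_succ]
    have he : -((ℓ : ℝ) + q + 1) * α / 2 - 1 - (j : ℝ) - 1
        = -((ℓ : ℝ) + q + 1) * α / 2 - 1 - ((j : ℕ) + 1 : ℕ) := by
      push_cast; ring
    rw [← he]
    ring

include hmR hα hc hA hM hMA in
lemma G_abs_bound (j : ℕ) (hj : j ≤ q) (s : ℝ) (hs : s ∈ Set.Ioi A) :
    |∑' ℓ : ℕ, gam α (ℓ + q + 1) * c ^ (-((ℓ : ℝ) + q + 1) * α / 2 - 1) *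
        (∏ i ∈ Finset.range j, (-((ℓ : ℝ) + q + 1) * α / 2 - 1 - (i : ℝ))) *
        s ^ (-((ℓ : ℝ) + q + 1) * α / 2 - 1 - (j : ℝ))|
      ≤ ((1 / π) * ((c * s) ^ (-((0 : ℝ) + q + 1) * α / 2 - 1) * s ^ (-(j : ℝ)))) *
        ∑' ℓ : ℕ, (((ℓ : ℝ) + (2 * q + 2)) ^ q * (M ^ (-(1 : ℝ) / mR)) ^ ℓ) := by
  have hs0 : 0 < s := lt_trans hA hs
  have hMs : M ≤ c * s := le_trans hMA (by nlinarith [hs.out])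
  have habs := summable_abs_G α mR q c A M hmR hα hc hA hM hMA j hj s hs
  have hgeo : Summable (fun ℓ : ℕ => (((ℓ : ℝ) + (2 * q + 2)) ^ q * (M ^ (-(1 : ℝ) / mR)) ^ ℓ)) := by
    apply summable_poly_geo q (2 * q + 2) _ (by positivity)
      (Real.rpow_nonneg (by linarith) _)
    exact Real.rpow_lt_one_of_one_lt_of_neg hM
      (div_neg_of_neg_of_pos (by norm_num) (by linarith))
  calc |∑' ℓ : ℕ, gam α (ℓ + q + 1) * c ^ (-((ℓ : ℝ) + q + 1) * α / 2 - 1) *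
        (∏ i ∈ Finset.range j, (-((ℓ : ℝ) + q + 1) * α / 2 - 1 - (i : ℝ))) *
        s ^ (-((ℓ : ℝ) + q + 1) * α / 2 - 1 - (j : ℝ))|
      ≤ ∑' ℓ : ℕ, |gam α (ℓ + q + 1) * c ^ (-((ℓ : ℝ) + q + 1) * α / 2 - 1) *
        (∏ i ∈ Finset.range j, (-((ℓ : ℝ) + q + 1) * α / 2 - 1 - (i : ℝ))) *
        s ^ (-((ℓ : ℝ) + q + 1) * α / 2 - 1 - (j : ℝ))| := by
        have := norm_tsum_le_tsum_norm (f := fun ℓ : ℕ =>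
          gam α (ℓ + q + 1) * c ^ (-((ℓ : ℝ) + q + 1) * α / 2 - 1) *
          (∏ i ∈ Finset.range j, (-((ℓ : ℝ) + q + 1) * α / 2 - 1 - (i : ℝ))) *
          s ^ (-((ℓ : ℝ) + q + 1) * α / 2 - 1 - (j : ℝ))) (by
            simp only [Real.norm_eq_abs]; exact habs)
        simp only [Real.norm_eq_abs] at this
        exact this
    _ ≤ ∑' ℓ : ℕ, ((1 / π) * ((c * s) ^ (-((0 : ℝ) + q + 1) * α / 2 - 1) * s ^ (-(j : ℝ)))) *
        (((ℓ : ℝ) + (2 * q + 2)) ^ q * (M ^ (-(1 : ℝ) / mR)) ^ ℓ) := by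
        apply Summable.tsum_le_tsum (fun ℓ => term_bound_s15 α mR hmR hα q j hj c M s hc hM hMs hs0 ℓ)
          habs (hgeo.mul_left _)
    _ = ((1 / π) * ((c * s) ^ (-((0 : ℝ) + q + 1) * α / 2 - 1) * s ^ (-(j : ℝ)))) *
        ∑' ℓ : ℕ, (((ℓ : ℝ) + (2 * q + 2)) ^ q * (M ^ (-(1 : ℝ) / mR)) ^ ℓ) := tsum_mul_left

end main

lemma integrand_bound (d q : ℕ) (α mR : ℝ) (hmR : 1 ≤ mR) (hα : α = 2 / mR)
    (x y : EuclideanSpace ℝ (Fin d)) (ε : ℝ) (hε : 0 < ε) (hdist : ε ≤ ‖x - y‖)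
    (c A M : ℝ) (hc : 0 < c) (hA : 0 < A) (hM : 1 < M) (hMA : M ≤ c * A)
    (j : ℕ) (hj : j ≤ q) (s : ℝ) (hs : s ∈ Set.Ioi A) :
    |s ^ j * gauss d s x y *
        iteratedDeriv j (fun s' : ℝ => ∑' ℓ : ℕ,
          gam α (ℓ + q + 1) * (c * s') ^ (-((ℓ : ℝ) + q + 1) * α / 2 - 1)) s|
      ≤ ((4 * π) ^ (-(d : ℝ) / 2) * (1 / π) *
          (∑' ℓ : ℕ, (((ℓ : ℝ) + (2 * q + 2)) ^ q * (M ^ (-(1 : ℝ) / mR)) ^ ℓ)) *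
          (Nat.ceil ((q : ℝ) / mR + (d : ℝ) / 2 + 1 / (2 * mR))).factorial *
          (4 / ε ^ 2) ^ ((q : ℝ) / mR + (d : ℝ) / 2 + 1 / (2 * mR)) *
          c ^ (-((0 : ℝ) + q + 1) * α / 2 - 1)) *
        s ^ (-(1 + 1 / (2 * mR))) := by
  have hmR0 : (0:ℝ) < mR := by linarith
  have hs0 : 0 < s := lt_trans hA hs
  set n : ℝ := (q : ℝ) / mR + (d : ℝ) / 2 + 1 / (2 * mR) with hn
  have hn0 : 0 ≤ n := by positivity
  set TM : ℝ := ∑' ℓ : ℕ, (((ℓ : ℝ) + (2 * q + 2)) ^ q * (M ^ (-(1 : ℝ) / mR)) ^ ℓ) with hTM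
  have hTM0 : 0 ≤ TM := tsum_nonneg (fun ℓ => by positivity)
  set P0 : ℝ := -((0 : ℝ) + q + 1) * α / 2 - 1 with hP0
  -- gauss bound
  have hgauss_pos : 0 < gauss d s x y := by
    rw [gauss]; positivity
  have hgauss : gauss d s x y ≤ (4 * π) ^ (-(d : ℝ) / 2) * s ^ (-(d : ℝ) / 2) *
      ((Nat.ceil n).factorial * ((4 / ε ^ 2) ^ n * s ^ n)) := by
    rw [gauss]
    have h1 : (4 * π * s) ^ (-(d : ℝ) / 2)
        = (4 * π) ^ (-(d : ℝ) / 2) * s ^ (-(d : ℝ) / 2) := by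
      rw [Real.mul_rpow (by positivity) hs0.le]
    have h2 : Real.exp (-‖x - y‖ ^ 2 / (4 * s)) ≤ Real.exp (-(ε ^ 2 / (4 * s))) := by
      apply Real.exp_le_exp.2
      rw [neg_div]
      apply neg_le_neg
      apply div_le_div_of_nonneg_right _ (by positivity)
      · exact pow_le_pow_left₀ hε.le hdist 2
    have h3 : Real.exp (-(ε ^ 2 / (4 * s))) ≤ (Nat.ceil n).factorial * (ε ^ 2 / (4 * s)) ^ (-n) :=
      exp_neg_bound n _ hn0 (by positivity)
    have h4 : (ε ^ 2 / (4 * s)) ^ (-n) = (4 / ε ^ 2) ^ n * s ^ n := by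
      rw [Real.rpow_neg (by positivity), ← Real.inv_rpow (by positivity),
        ← Real.mul_rpow (by positivity) hs0.le]
      congr 1
      field_simp
    rw [h1]
    have h5 : Real.exp (-‖x - y‖ ^ 2 / (4 * s))
        ≤ (Nat.ceil n).factorial * ((4 / ε ^ 2) ^ n * s ^ n) := by
      rw [← h4]
      exact le_trans h2 h3
    exact mul_le_mul_of_nonneg_left h5 (by positivity)
  -- iterated derivative bound
  rw [iter_deriv_eq α mR q c A M hmR hα hc hA hM hMA j hj s hs]
  have hG := G_abs_bound α mR q c A M hmR hα hc hA hM hMA j hj s hs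
  rw [abs_mul, abs_of_pos (by positivity : (0:ℝ) < s ^ j * gauss d s x y)]
  calc s ^ j * gauss d s x y * |∑' ℓ : ℕ, gam α (ℓ + q + 1) * c ^ (-((ℓ : ℝ) + q + 1) * α / 2 - 1) *
        (∏ i ∈ Finset.range j, (-((ℓ : ℝ) + q + 1) * α / 2 - 1 - (i : ℝ))) *
        s ^ (-((ℓ : ℝ) + q + 1) * α / 2 - 1 - (j : ℝ))|
      ≤ s ^ j * ((4 * π) ^ (-(d : ℝ) / 2) * s ^ (-(d : ℝ) / 2) *
          ((Nat.ceil n).factorial * ((4 / ε ^ 2) ^ n * s ^ n))) *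
        (((1 / π) * ((c * s) ^ P0 * s ^ (-(j : ℝ)))) * TM) := by
        apply mul_le_mul (mul_le_mul_of_nonneg_left hgauss (by positivity)) hG
          (abs_nonneg _) (by positivity)
    _ = ((4 * π) ^ (-(d : ℝ) / 2) * (1 / π) * TM * (Nat.ceil n).factorial *
          (4 / ε ^ 2) ^ n * c ^ P0) *
        (s ^ (j : ℝ) * (s ^ (-(d : ℝ) / 2) * (s ^ n * (s ^ P0 * s ^ (-(j : ℝ)))))) := by
        rw [Real.mul_rpow hc.le hs0.le, ← Real.rpow_natCast s j]
        ring
    _ = ((4 * π) ^ (-(d : ℝ) / 2) * (1 / π) * TM * (Nat.ceil n).factorial *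
          (4 / ε ^ 2) ^ n * c ^ P0) * s ^ (-(1 + 1 / (2 * mR))) := by
        rw [← Real.rpow_add hs0, ← Real.rpow_add hs0, ← Real.rpow_add hs0,
          ← Real.rpow_add hs0]
        congr 1
        congr 1
        rw [hP0, hn, hα]
        have hne : mR ≠ 0 := by linarith
        field_simp
        ring

set_option maxHeartbeats 1000000 in
/-- Lemma 3.2: the tail part of the series. For every `M > 1` there is `β(q,M) > 0`
with `β(q,M) → 0` as `M → ∞` such that
`sup_{0<t≤1} sup_{y ∈ Dᶜ} |t^{-q-2/α} ∑_{j=0}^q a_j(q) ∫_{Mt^{2/α}}^∞ s^j g(s,x,y)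
  (∂^j/∂s^j)(∑_{k=q+1}^∞ γ_k (t^{-2/α}s)^{-kα/2-1}) ds| ≤ β(q,M)`. -/
theorem stmt15 (m : ℕ) (hm : 2 < m) (α : ℝ) (hα : α = 2 / m) (d : ℕ) (hd : 1 ≤ d)
    (D : Set (EuclideanSpace ℝ (Fin d))) (hDo : IsOpen D) (hDb : Bornology.IsBounded D)
    (x : EuclideanSpace ℝ (Fin d)) (hx : x ∈ D)
    (q : ℕ) (hq : 0 < q) (a : ℕ → ℝ)
    (ha : RealizesScalingDerivIdentity (2 / α) q a) :
    ∃ β : ℝ → ℝ, Filter.Tendsto β Filter.atTop (nhds 0) ∧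
      ∀ M : ℝ, 1 < M → 0 < β M ∧
        ∀ t ∈ Set.Ioc (0 : ℝ) 1, ∀ y ∈ Dᶜ,
          |t ^ (-(q : ℝ) - 2 / α) *
              ∑ j ∈ Finset.range (q + 1),
                a j * ∫ s in Set.Ioi (M * t ^ (2 / α)),
                  s ^ j * gauss d s x y *
                    iteratedDeriv j
                      (fun s' : ℝ => ∑' ℓ : ℕ,
                        gam α (ℓ + q + 1) *
                          (t ^ (-2 / α) * s') ^ (-((ℓ : ℝ) + q + 1) * α / 2 - 1)) s| ≤
            β M := by
  classical
  -- basic constants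
  set mR : ℝ := (m : ℝ) with hmRdef
  have hmR3 : (3 : ℝ) ≤ mR := by
    have h3 : 3 ≤ m := hm
    rw [hmRdef]
    exact_mod_cast h3
  have hmR : (1 : ℝ) ≤ mR := by linarith
  have hmR0 : (0 : ℝ) < mR := by linarith
  have hmRne : mR ≠ 0 := by linarith
  have hαm : α = 2 / mR := hα
  have hα0 : 0 < α := by rw [hαm]; positivity
  have h2α : 2 / α = mR := by rw [hαm]; field_simp; try ring
  have hn2α : -2 / α = -mR := by rw [hαm]; field_simp; try ring
  -- distance to the complement
  obtain ⟨ε, hε, hball⟩ := Metric.isOpen_iff.mp hDo x hx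
  have hdist : ∀ y ∈ Dᶜ, ε ≤ ‖x - y‖ := by
    intro y hy
    by_contra hlt
    push_neg at hlt
    apply hy
    apply hball
    rw [Metric.mem_ball, dist_comm, dist_eq_norm]
    exact hlt
  -- constants in the bound
  set n : ℝ := (q : ℝ) / mR + (d : ℝ) / 2 + 1 / (2 * mR) with hn
  have hn0 : 0 ≤ n := by positivity
  set Nf : ℝ := ((Nat.ceil n).factorial : ℝ) with hNf
  have hNf1 : (1 : ℝ) ≤ Nf := by
    rw [hNf]; exact_mod_cast Nat.one_le_iff_ne_zero.2 (Nat.ceil n).factorial_ne_zero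
  set C1 : ℝ := (4 * π) ^ (-(d : ℝ) / 2) * (1 / π) * Nf * (4 / ε ^ 2) ^ n * (2 * mR) with hC1
  have hC1pos : 0 < C1 := by rw [hC1]; positivity
  set S : ℝ := ∑ j ∈ Finset.range (q + 1), |a j| with hS
  have hS0 : 0 ≤ S := Finset.sum_nonneg fun j _ => abs_nonneg _
  set CST : ℝ := (1 + S) * C1 with hCST
  have hCSTpos : 0 < CST := by positivity
  set TMf : ℝ → ℝ := fun M =>
    ∑' ℓ : ℕ, (((ℓ : ℝ) + (2 * q + 2)) ^ q * (M ^ (-(1 : ℝ) / mR)) ^ ℓ) with hTMf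
  have hTMsum : ∀ M : ℝ, 1 < M →
      Summable (fun ℓ : ℕ => (((ℓ : ℝ) + (2 * q + 2)) ^ q * (M ^ (-(1 : ℝ) / mR)) ^ ℓ)) := by
    intro M hM
    exact summable_poly_geo q (2 * q + 2) (M ^ (-(1 : ℝ) / mR))
      (by positivity) (Real.rpow_nonneg (by linarith) _)
      (Real.rpow_lt_one_of_one_lt_of_neg hM
        (div_neg_of_neg_of_pos (by norm_num) hmR0))
  have hTMnonneg : ∀ M : ℝ, 0 ≤ M → 0 ≤ TMf M := fun M hM0 => tsum_nonneg fun ℓ => by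
    have h1 : 0 ≤ M ^ (-(1 : ℝ) / mR) := Real.rpow_nonneg hM0 _
    positivity
  refine ⟨fun M => CST * M ^ (-(1 : ℝ) / (2 * mR)) * TMf M, ?_, ?_⟩
  · -- tendsto 0
    have hTMle : ∀ M : ℝ, 2 ≤ M → TMf M ≤ TMf 2 := by
      intro M hM2
      apply Summable.tsum_le_tsum _ (hTMsum M (by linarith)) (hTMsum 2 one_lt_two)
      intro ℓ
      apply mul_le_mul_of_nonneg_left _ (by positivity)
      apply pow_le_pow_left₀ (Real.rpow_nonneg (by linarith) _)
      exact Real.rpow_le_rpow_of_nonpos two_pos hM2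
        (div_nonpos_of_nonpos_of_nonneg (by norm_num) hmR0.le)
    have hg : Tendsto (fun M : ℝ => (CST * TMf 2) * M ^ (-(1 / (2 * mR)))) atTop (nhds 0) := by
      have h1 : Tendsto (fun M : ℝ => M ^ (-(1 / (2 * mR)))) atTop (nhds 0) :=
        tendsto_rpow_neg_atTop (by positivity)
      have := h1.const_mul (CST * TMf 2)
      simpa using this
    apply tendsto_of_tendsto_of_tendsto_of_le_of_le' tendsto_const_nhds hg
    · filter_upwards [eventually_ge_atTop (2 : ℝ)] with M hM2
      have hM0 : (0:ℝ) < M := by linarith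
      exact mul_nonneg (mul_nonneg hCSTpos.le (Real.rpow_nonneg hM0.le _)) (hTMnonneg M (by linarith))
    · filter_upwards [eventually_ge_atTop (2 : ℝ)] with M hM2
      have hM0 : (0:ℝ) < M := by linarith
      rw [show (-(1 : ℝ) / (2 * mR)) = -(1 / (2 * mR)) by ring]
      calc CST * M ^ (-(1 / (2 * mR))) * TMf M
          ≤ CST * M ^ (-(1 / (2 * mR))) * TMf 2 := by
            apply mul_le_mul_of_nonneg_left (hTMle M hM2) (by positivity)
        _ = (CST * TMf 2) * M ^ (-(1 / (2 * mR))) := by ring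
  · -- main bound
    intro M hM
    have hM0 : (0:ℝ) < M := by linarith
    have hTMpos : 0 < TMf M := by
      apply Summable.tsum_pos (hTMsum M hM) (fun ℓ => by positivity) 0
      positivity
    refine ⟨by positivity, ?_⟩
    intro t ht y hy
    obtain ⟨ht0, ht1⟩ := ht
    have hdxy := hdist y hy
    -- scaling constants
    set c : ℝ := t ^ (-2 / α) with hcdef
    set A : ℝ := M * t ^ (2 / α) with hAdef
    have hc : 0 < c := Real.rpow_pos_of_pos ht0 _
    have hA : 0 < A := by positivity
    have hcA : c * A = M := by
      rw [hcdef, hAdef]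
      rw [show t ^ (-2 / α) * (M * t ^ (2 / α)) = M * (t ^ (-2 / α) * t ^ (2 / α)) by ring]
      rw [← Real.rpow_add ht0]
      rw [show -2 / α + 2 / α = 0 by ring, Real.rpow_zero, mul_one]
    have hMA : M ≤ c * A := le_of_eq hcA.symm
    set P0 : ℝ := -((0 : ℝ) + q + 1) * α / 2 - 1 with hP0
    set KB : ℝ := (4 * π) ^ (-(d : ℝ) / 2) * (1 / π) * TMf M * Nf * (4 / ε ^ 2) ^ n *
      c ^ P0 with hKB
    have hKBpos : 0 < KB := by
      rw [hKB]; positivity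
    -- the exponent for the integral
    have heexp : -(1 + 1 / (2 * mR)) < -1 := by
      have : 0 < 1 / (2 * mR) := by positivity
      linarith
    -- integral bound for each j
    have hIb : ∀ j, j ≤ q →
        |∫ s in Set.Ioi A, s ^ j * gauss d s x y *
            iteratedDeriv j (fun s' : ℝ => ∑' ℓ : ℕ,
              gam α (ℓ + q + 1) * (c * s') ^ (-((ℓ : ℝ) + q + 1) * α / 2 - 1)) s|
          ≤ KB * (2 * mR * A ^ (-(1 / (2 * mR)))) := by
      intro j hj
      have hint : IntegrableOn (fun s : ℝ => s ^ (-(1 + 1 / (2 * mR)))) (Set.Ioi A) :=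
        integrableOn_Ioi_rpow_of_lt heexp hA
      have hintKB : Integrable (fun s : ℝ => KB * s ^ (-(1 + 1 / (2 * mR))))
          (volume.restrict (Set.Ioi A)) := hint.const_mul KB
      have hbound := MeasureTheory.norm_integral_le_of_norm_le hintKB
        (f := fun s : ℝ => s ^ j * gauss d s x y *
            iteratedDeriv j (fun s' : ℝ => ∑' ℓ : ℕ,
              gam α (ℓ + q + 1) * (c * s') ^ (-((ℓ : ℝ) + q + 1) * α / 2 - 1)) s)
        (by
          rw [MeasureTheory.ae_restrict_iff' measurableSet_Ioi]
          apply Filter.Eventually.of_forall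
          intro s hs
          rw [Real.norm_eq_abs]
          exact integrand_bound d q α mR hmR hαm x y ε hε hdxy c A M hc hA hM hMA j hj s hs)
      rw [Real.norm_eq_abs] at hbound
      refine le_trans hbound (le_of_eq ?_)
      rw [MeasureTheory.integral_const_mul]
      congr 1
      rw [integral_Ioi_rpow_of_lt heexp hA]
      rw [show -(1 + 1 / (2 * mR)) + 1 = -(1 / (2 * mR)) by ring]
      field_simp
    -- power of t bookkeeping
    have htpow : t ^ (-(q : ℝ) - 2 / α) * c ^ P0 * A ^ (-(1 / (2 * mR)))
        ≤ M ^ (-(1 : ℝ) / (2 * mR)) := by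
      have h1 : c ^ P0 = t ^ (-mR * P0) := by
        rw [hcdef, hn2α, ← Real.rpow_mul ht0.le]
      have h2 : A ^ (-(1 / (2 * mR))) = M ^ (-(1 / (2 * mR))) * t ^ (mR * -(1 / (2 * mR))) := by
        rw [hAdef, h2α, Real.mul_rpow hM0.le (Real.rpow_nonneg ht0.le _),
          ← Real.rpow_mul ht0.le]
      have h3 : t ^ (-(q : ℝ) - 2 / α) = t ^ (-(q : ℝ) - mR) := by rw [h2α]
      rw [h1, h2, h3]
      rw [show t ^ (-(q : ℝ) - mR) * t ^ (-mR * P0) *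
          (M ^ (-(1 / (2 * mR))) * t ^ (mR * -(1 / (2 * mR))))
        = M ^ (-(1 / (2 * mR))) * (t ^ (-(q : ℝ) - mR) * t ^ (-mR * P0) *
            t ^ (mR * -(1 / (2 * mR)))) by ring]
      rw [← Real.rpow_add ht0, ← Real.rpow_add ht0]
      have hexp : -(q : ℝ) - mR + -mR * P0 + mR * -(1 / (2 * mR)) = 1 / 2 := by
        rw [hP0, hαm]
        field_simp
        ring
      rw [hexp]
      have h4 : t ^ (1/2 : ℝ) ≤ 1 := Real.rpow_le_one ht0.le ht1 (by norm_num)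
      rw [show (-(1 : ℝ) / (2 * mR)) = -(1 / (2 * mR)) by ring]
      nlinarith [Real.rpow_pos_of_pos hM0 (-(1 / (2 * mR))), Real.rpow_pos_of_pos ht0 (1/2 : ℝ)]
    -- assemble
    have habs : |t ^ (-(q : ℝ) - 2 / α) *
        ∑ j ∈ Finset.range (q + 1),
          a j * ∫ s in Set.Ioi A, s ^ j * gauss d s x y *
            iteratedDeriv j (fun s' : ℝ => ∑' ℓ : ℕ,
              gam α (ℓ + q + 1) * (c * s') ^ (-((ℓ : ℝ) + q + 1) * α / 2 - 1)) s|
        ≤ t ^ (-(q : ℝ) - 2 / α) * (S * (KB * (2 * mR * A ^ (-(1 / (2 * mR)))))) := by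
      rw [abs_mul, abs_of_pos (Real.rpow_pos_of_pos ht0 _)]
      apply mul_le_mul_of_nonneg_left _ (Real.rpow_pos_of_pos ht0 _).le
      calc |∑ j ∈ Finset.range (q + 1),
            a j * ∫ s in Set.Ioi A, s ^ j * gauss d s x y *
              iteratedDeriv j (fun s' : ℝ => ∑' ℓ : ℕ,
                gam α (ℓ + q + 1) * (c * s') ^ (-((ℓ : ℝ) + q + 1) * α / 2 - 1)) s|
          ≤ ∑ j ∈ Finset.range (q + 1),
            |a j * ∫ s in Set.Ioi A, s ^ j * gauss d s x y *
              iteratedDeriv j (fun s' : ℝ => ∑' ℓ : ℕ,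
                gam α (ℓ + q + 1) * (c * s') ^ (-((ℓ : ℝ) + q + 1) * α / 2 - 1)) s| :=
            Finset.abs_sum_le_sum_abs _ _
        _ ≤ ∑ j ∈ Finset.range (q + 1), |a j| * (KB * (2 * mR * A ^ (-(1 / (2 * mR))))) := by
            apply Finset.sum_le_sum
            intro j hj
            rw [abs_mul]
            exact mul_le_mul_of_nonneg_left
              (hIb j (Nat.lt_succ_iff.mp (Finset.mem_range.mp hj))) (abs_nonneg _)
        _ = S * (KB * (2 * mR * A ^ (-(1 / (2 * mR))))) := by
            rw [hS, ← Finset.sum_mul]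
    beta_reduce
    refine le_trans habs ?_
    -- final constant juggling
    calc t ^ (-(q : ℝ) - 2 / α) * (S * (KB * (2 * mR * A ^ (-(1 / (2 * mR))))))
        = (S * ((4 * π) ^ (-(d : ℝ) / 2) * (1 / π) * Nf * (4 / ε ^ 2) ^ n * (2 * mR))) *
          (TMf M * (t ^ (-(q : ℝ) - 2 / α) * c ^ P0 * A ^ (-(1 / (2 * mR))))) := by
          rw [hKB]; ring
      _ ≤ (S * C1) * (TMf M * M ^ (-(1 : ℝ) / (2 * mR))) := by
          rw [hC1]
          apply mul_le_mul_of_nonneg_left _ (by positivity)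
          exact mul_le_mul_of_nonneg_left htpow (hTMnonneg M (by linarith))
      _ ≤ ((1 + S) * C1) * (TMf M * M ^ (-(1 : ℝ) / (2 * mR))) := by
          apply mul_le_mul_of_nonneg_right _ (by positivity)
          apply mul_le_mul_of_nonneg_right _ hC1pos.le
          linarith
      _ = CST * M ^ (-(1 : ℝ) / (2 * mR)) * TMf M := by rw [hCST]; ring
end

section
/- Let m > 2 be an integer, α = 2/m, d ≥ 1, x, y ∈ ℝ^d with x ≠ y, let q be a positive integer, M > 1, and let a_0(q), …, a_q(q) be real constants realizing the scaling-derivative identity for exponent 2/α. Then for every t > 0, t^{-q−2/α} ∑_{j=0}^q a_j(q) ∫_{M t^{2/α}}^∞ s^j g(s,x,y) (∂^j/∂s^j)( ∑_{k=1}^q γ_k (t^{-2/α}s)^{-kα/2−1} ) ds = q! · γ_q ∫_{M t^{2/α}}^∞ s^{-qα/2−1} g(s,x,y) ds. -/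
open Real MeasureTheory Set Filter Topology

lemma iteratedDeriv_sum_rpow (K : Finset ℕ) (b p : ℕ → ℝ) (j : ℕ) :
    ∀ s : ℝ, 0 < s →
      iteratedDeriv j (fun u : ℝ => ∑ k ∈ K, b k * u ^ (p k)) s =
        ∑ k ∈ K, b k * (∏ i ∈ Finset.range j, (p k - i)) * s ^ (p k - j) := by
  induction j with
  | zero => intro s hs; simp
  | succ j ih =>
    intro s hs
    rw [iteratedDeriv_succ]
    have hev : (iteratedDeriv j (fun u : ℝ => ∑ k ∈ K, b k * u ^ (p k))) =ᶠ[𝓝 s]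
        fun u => ∑ k ∈ K, b k * (∏ i ∈ Finset.range j, (p k - i)) * u ^ (p k - j) := by
      filter_upwards [isOpen_Ioi.mem_nhds hs] with u hu using ih u hu
    rw [hev.deriv_eq]
    have hd : HasDerivAt
        (fun u : ℝ => ∑ k ∈ K, b k * (∏ i ∈ Finset.range j, (p k - i)) * u ^ (p k - j))
        (∑ k ∈ K, b k * (∏ i ∈ Finset.range j, (p k - i)) * ((p k - j) * s ^ (p k - j - 1))) s :=
      HasDerivAt.fun_sum fun k _ => (Real.hasDerivAt_rpow_const (Or.inl hs.ne')).const_mul _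
    rw [hd.deriv]
    refine Finset.sum_congr rfl fun k _ => ?_
    rw [Finset.prod_range_succ]
    have h1 : p k - ((j : ℕ) + 1 : ℕ) = p k - j - 1 := by push_cast; ring
    rw [h1]; ring

lemma prod_range_cast_sub (n : ℕ) : ∏ i ∈ Finset.range n, ((n : ℝ) - i) = (n.factorial : ℝ) := by
  rw [← Finset.prod_range_reflect]
  have h : ∀ j ∈ Finset.range n, (n : ℝ) - (n - 1 - j : ℕ) = ((j : ℝ) + 1) := by
    intro j hj
    rw [Finset.mem_range] at hj
    have h1 : (n - 1 - j : ℕ) = n - (j + 1) := by omega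
    rw [h1, Nat.cast_sub (by omega)]
    push_cast; ring
  rw [Finset.prod_congr rfl h]
  rw [← Finset.prod_range_add_one_eq_factorial n]
  push_cast; rfl


/-- For `m > 2`, `α = 2/m`, `x ≠ y`, a positive integer `q`, `M > 1`, and constants
`a_0(q), …, a_q(q)` realizing the scaling-derivative identity for exponent `2/α`:
for every `t > 0`,
`t^{-q-2/α} ∑_{j=0}^q a_j(q) ∫_{Mt^{2/α}}^∞ s^j g(s,x,y)
  (∂^j/∂s^j)(∑_{k=1}^q γ_k (t^{-2/α}s)^{-kα/2-1}) ds
  = q! γ_q ∫_{Mt^{2/α}}^∞ s^{-qα/2-1} g(s,x,y) ds`. -/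
theorem stmt16 (m : ℕ) (hm : 2 < m) (α : ℝ) (hα : α = 2 / m) (d : ℕ) (hd : 1 ≤ d)
    (x y : EuclideanSpace ℝ (Fin d)) (hxy : x ≠ y)
    (q : ℕ) (hq : 0 < q) (M : ℝ) (hM : 1 < M) (a : ℕ → ℝ)
    (ha : RealizesScalingDerivIdentity (2 / α) q a) :
    ∀ t : ℝ, 0 < t →
      t ^ (-(q : ℝ) - 2 / α) *
          ∑ j ∈ Finset.range (q + 1),
            a j * ∫ s in Set.Ioi (M * t ^ (2 / α)),
              s ^ j * gauss d s x y *
                iteratedDeriv j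
                  (fun s' : ℝ => ∑ k ∈ Finset.Icc 1 q,
                    gam α k * (t ^ (-2 / α) * s') ^ (-(k : ℝ) * α / 2 - 1)) s =
        (q.factorial : ℝ) * gam α q *
          ∫ s in Set.Ioi (M * t ^ (2 / α)), s ^ (-(q : ℝ) * α / 2 - 1) * gauss d s x y := by
  intro t ht
  have hm0 : (0:ℝ) < m := by positivity
  have hα0 : 0 < α := by rw [hα]; positivity
  set A : ℝ := M * t ^ (2 / α) with hAdef
  have hA : 0 < A := mul_pos (lt_trans one_pos hM) (Real.rpow_pos_of_pos ht _)
  set c : ℝ := t ^ (-2 / α) with hcdef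
  have hc : 0 < c := Real.rpow_pos_of_pos ht _
  have hcc : t ^ (-(2 / α)) = c := by rw [hcdef, neg_div]
  -- the function F
  set F : ℝ → ℝ :=
    fun u : ℝ => ∑ k ∈ Finset.Icc 1 q, gam α k * u ^ (-(k : ℝ) * α / 2 - 1) with hFdef
  have hFcd : ContDiffOn ℝ (q : ℕ∞) F (Set.Ioi 0) := by
    refine ContDiffOn.sum fun k _ => contDiffOn_const.mul ?_
    exact fun u hu => (Real.contDiffAt_rpow_const_of_ne (ne_of_gt hu)).contDiffWithinAt
  -- exponent computation
  have hexpk : ∀ k : ℕ, -(2 / α) + -(2 / α) * (-(k : ℝ) * α / 2 - 1) = (k : ℝ) := by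
    intro k; field_simp; ring
  -- the key pointwise identity from ha
  have hkey : ∀ s : ℝ, 0 < s →
      ∑ j ∈ Finset.range (q + 1),
        a j * t ^ (-(2 / α) - q) * (c * s) ^ j * iteratedDeriv j F (c * s) =
      (q.factorial : ℝ) * gam α q * s ^ (-(q : ℝ) * α / 2 - 1) := by
    intro s hs
    have h1 := ha F hFcd s hs t ht
    rw [hcc] at h1
    rw [← h1]
    have hev : (fun u : ℝ => u ^ (-(2 / α)) * F (u ^ (-(2 / α)) * s)) =ᶠ[𝓝 t]
        fun u => ∑ k ∈ Finset.Icc 1 q,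
          (gam α k * s ^ (-(k : ℝ) * α / 2 - 1)) * u ^ ((k : ℕ) : ℝ) := by
      filter_upwards [isOpen_Ioi.mem_nhds ht] with u hu
      have hu0 : (0:ℝ) < u := hu
      simp only [hFdef, Finset.mul_sum]
      refine Finset.sum_congr rfl fun k _ => ?_
      have e1 : (u ^ (-(2 / α)) * s) ^ (-(k : ℝ) * α / 2 - 1)
          = u ^ (-(2 / α) * (-(k : ℝ) * α / 2 - 1)) * s ^ (-(k : ℝ) * α / 2 - 1) := by
        rw [Real.mul_rpow (Real.rpow_nonneg hu0.le _) hs.le, ← Real.rpow_mul hu0.le]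
      have e2 : u ^ (-(2 / α)) * u ^ (-(2 / α) * (-(k : ℝ) * α / 2 - 1)) = u ^ ((k : ℕ) : ℝ) := by
        rw [← Real.rpow_add hu0, hexpk k]
      calc u ^ (-(2 / α)) * (gam α k * (u ^ (-(2 / α)) * s) ^ (-(k : ℝ) * α / 2 - 1))
          = gam α k * s ^ (-(k : ℝ) * α / 2 - 1)
              * (u ^ (-(2 / α)) * u ^ (-(2 / α) * (-(k : ℝ) * α / 2 - 1))) := by rw [e1]; ring
        _ = gam α k * s ^ (-(k : ℝ) * α / 2 - 1) * u ^ ((k : ℕ) : ℝ) := by rw [e2]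
    rw [Filter.EventuallyEq.iteratedDeriv_eq q hev,
      iteratedDeriv_sum_rpow (Finset.Icc 1 q)
        (fun k => gam α k * s ^ (-(k : ℝ) * α / 2 - 1)) (fun k => ((k : ℕ) : ℝ)) q t ht]
    rw [Finset.sum_eq_single q]
    · rw [prod_range_cast_sub q, sub_self, Real.rpow_zero]
      ring
    · intro k hk hkq
      have hklt : k < q := lt_of_le_of_ne (Finset.mem_Icc.mp hk).2 hkq
      have hz : (∏ i ∈ Finset.range q, ((k : ℝ) - (i : ℕ))) = 0 :=
        Finset.prod_eq_zero (Finset.mem_range.mpr hklt) (sub_self _)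
      rw [hz]; ring
    · intro hnq
      exact absurd (Finset.mem_Icc.mpr ⟨hq, le_refl q⟩) hnq
  -- explicit form of the inner iterated derivative
  have hDexp : ∀ (j : ℕ) (s : ℝ), 0 < s →
      iteratedDeriv j (fun s' : ℝ => ∑ k ∈ Finset.Icc 1 q,
          gam α k * (c * s') ^ (-(k : ℝ) * α / 2 - 1)) s
        = ∑ k ∈ Finset.Icc 1 q, gam α k * c ^ (-(k : ℝ) * α / 2 - 1) *
            (∏ i ∈ Finset.range j, (-(k : ℝ) * α / 2 - 1 - i)) *
              s ^ (-(k : ℝ) * α / 2 - 1 - j) := by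
    intro j s hs
    have hev2 : (fun s' : ℝ => ∑ k ∈ Finset.Icc 1 q,
        gam α k * (c * s') ^ (-(k : ℝ) * α / 2 - 1)) =ᶠ[𝓝 s]
        fun s' => ∑ k ∈ Finset.Icc 1 q,
          gam α k * c ^ (-(k : ℝ) * α / 2 - 1) * s' ^ (-(k : ℝ) * α / 2 - 1) := by
      filter_upwards [isOpen_Ioi.mem_nhds hs] with u hu
      refine Finset.sum_congr rfl fun k _ => ?_
      rw [Real.mul_rpow hc.le (le_of_lt hu)]
      ring
    rw [Filter.EventuallyEq.iteratedDeriv_eq j hev2,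
      iteratedDeriv_sum_rpow (Finset.Icc 1 q)
        (fun k => gam α k * c ^ (-(k : ℝ) * α / 2 - 1))
        (fun k => -(k : ℝ) * α / 2 - 1) j s hs]
  -- integrability of the basic integrands
  have hbase : ∀ k : ℕ, 1 ≤ k →
      IntegrableOn (fun s : ℝ => s ^ (-(k : ℝ) * α / 2 - 1) * gauss d s x y) (Set.Ioi A) := by
    intro k hk
    have hcont : ContinuousOn
        (fun s : ℝ => s ^ (-(k : ℝ) * α / 2 - 1) * gauss d s x y) (Set.Ioi A) := by
      intro s hs
      have hs0 : 0 < s := lt_trans hA hs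
      apply ContinuousAt.continuousWithinAt
      apply ContinuousAt.mul
      · exact Real.continuousAt_rpow_const s _ (Or.inl hs0.ne')
      · unfold gauss
        apply ContinuousAt.mul
        · exact (Real.continuousAt_rpow_const _ _ (Or.inl (by positivity))).comp
            ((continuous_const.mul continuous_id).continuousAt)
        · exact (Real.continuous_exp.continuousAt).comp
            (ContinuousAt.div continuousAt_const
              ((continuous_const.mul continuous_id).continuousAt) (by positivity))
    have hk1 : (1 : ℝ) ≤ (k : ℝ) := by exact_mod_cast hk
    have hdom : IntegrableOn
        (fun s : ℝ => (4 * π) ^ (-(d : ℝ) / 2) *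
          s ^ (-(k : ℝ) * α / 2 - 1 + -(d : ℝ) / 2)) (Set.Ioi A) := by
      apply Integrable.const_mul
      apply integrableOn_Ioi_rpow_of_lt _ hA
      have h1 : 0 < (k : ℝ) * α := mul_pos (lt_of_lt_of_le one_pos hk1) hα0
      have h2 : (0 : ℝ) ≤ (d : ℝ) := Nat.cast_nonneg d
      linarith
    refine hdom.mono' (hcont.aestronglyMeasurable measurableSet_Ioi) ?_
    filter_upwards [ae_restrict_mem measurableSet_Ioi] with s hs
    have hs0 : 0 < s := lt_trans hA hs
    have hgpos : 0 < gauss d s x y := by unfold gauss; positivity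
    rw [Real.norm_eq_abs, abs_of_pos (mul_pos (Real.rpow_pos_of_pos hs0 _) hgpos)]
    have hexp1 : Real.exp (-‖x - y‖ ^ 2 / (4 * s)) ≤ 1 := by
      rw [Real.exp_le_one_iff]
      apply div_nonpos_of_nonpos_of_nonneg _ (by positivity)
      simp [sq_nonneg]
    calc s ^ (-(k : ℝ) * α / 2 - 1) * gauss d s x y
        ≤ s ^ (-(k : ℝ) * α / 2 - 1) * ((4 * π * s) ^ (-(d : ℝ) / 2) * 1) := by
          unfold gauss
          gcongr <;> first
            | exact (Real.rpow_pos_of_pos hs0 _).le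
            | exact (Real.rpow_pos_of_pos (by positivity) _).le
            | exact hexp1
      _ = (4 * π) ^ (-(d : ℝ) / 2) * s ^ (-(k : ℝ) * α / 2 - 1 + -(d : ℝ) / 2) := by
          rw [mul_one, Real.mul_rpow (by positivity) hs0.le, Real.rpow_add hs0]; ring
  -- integrability of the full integrands
  have hintf : ∀ j : ℕ, IntegrableOn
      (fun s : ℝ => s ^ j * gauss d s x y *
        iteratedDeriv j (fun s' : ℝ => ∑ k ∈ Finset.Icc 1 q,
          gam α k * (c * s') ^ (-(k : ℝ) * α / 2 - 1)) s) (Set.Ioi A) := by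
    intro j
    have hInt : IntegrableOn (fun s : ℝ => ∑ k ∈ Finset.Icc 1 q,
        (gam α k * c ^ (-(k : ℝ) * α / 2 - 1) *
          (∏ i ∈ Finset.range j, (-(k : ℝ) * α / 2 - 1 - i))) *
            (s ^ (-(k : ℝ) * α / 2 - 1) * gauss d s x y)) (Set.Ioi A) := by
      apply MeasureTheory.integrable_finset_sum
      intro k hk
      exact (hbase k (Finset.mem_Icc.mp hk).1).const_mul _
    refine hInt.congr_fun (fun s hs => ?_) measurableSet_Ioi
    have hs0 : 0 < s := lt_trans hA hs
    rw [hDexp j s hs0, Finset.mul_sum]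
    refine Finset.sum_congr rfl fun k _ => ?_
    have hsj : (s : ℝ) ^ j * s ^ (-(k : ℝ) * α / 2 - 1 - j) = s ^ (-(k : ℝ) * α / 2 - 1) := by
      rw [← Real.rpow_natCast s j, ← Real.rpow_add hs0]
      congr 1; ring
    linear_combination (-(gam α k * c ^ (-(k : ℝ) * α / 2 - 1) *
      (∏ i ∈ Finset.range j, (-(k : ℝ) * α / 2 - 1 - (i : ℕ))) * gauss d s x y)) * hsj
  -- pointwise identity on the domain of integration
  have hpoint : ∀ s ∈ Set.Ioi A,
      (∑ j ∈ Finset.range (q + 1), (t ^ (-(q : ℝ) - 2 / α) * a j) *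
        (s ^ j * gauss d s x y *
          iteratedDeriv j (fun s' : ℝ => ∑ k ∈ Finset.Icc 1 q,
            gam α k * (c * s') ^ (-(k : ℝ) * α / 2 - 1)) s))
      = (q.factorial : ℝ) * gam α q * (s ^ (-(q : ℝ) * α / 2 - 1) * gauss d s x y) := by
    intro s hs
    have hs0 : 0 < s := lt_trans hA hs
    have hcs : 0 < c * s := mul_pos hc hs0
    have hbridge : ∀ j : ℕ,
        s ^ j * iteratedDeriv j (fun s' : ℝ => ∑ k ∈ Finset.Icc 1 q,
          gam α k * (c * s') ^ (-(k : ℝ) * α / 2 - 1)) s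
        = (c * s) ^ j * iteratedDeriv j F (c * s) := by
      intro j
      rw [hDexp j s hs0, hFdef,
        iteratedDeriv_sum_rpow (Finset.Icc 1 q) (fun k => gam α k)
          (fun k => -(k : ℝ) * α / 2 - 1) j (c * s) hcs,
        Finset.mul_sum, Finset.mul_sum]
      refine Finset.sum_congr rfl fun k _ => ?_
      have h1 : (s : ℝ) ^ j * s ^ (-(k : ℝ) * α / 2 - 1 - j) = s ^ (-(k : ℝ) * α / 2 - 1) := by
        rw [← Real.rpow_natCast s j, ← Real.rpow_add hs0]
        congr 1; ring
      have h2 : (c * s) ^ j * (c * s) ^ (-(k : ℝ) * α / 2 - 1 - j)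
          = c ^ (-(k : ℝ) * α / 2 - 1) * s ^ (-(k : ℝ) * α / 2 - 1) := by
        rw [← Real.rpow_natCast (c * s) j, ← Real.rpow_add hcs,
          show (j : ℝ) + (-(k : ℝ) * α / 2 - 1 - j) = -(k : ℝ) * α / 2 - 1 from by ring,
          Real.mul_rpow hc.le hs0.le]
      linear_combination (gam α k * c ^ (-(k : ℝ) * α / 2 - 1) *
          (∏ i ∈ Finset.range j, (-(k : ℝ) * α / 2 - 1 - (i : ℕ)))) * h1
        - (gam α k * (∏ i ∈ Finset.range j, (-(k : ℝ) * α / 2 - 1 - (i : ℕ)))) * h2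
    have hE : t ^ (-(q : ℝ) - 2 / α) = t ^ (-(2 / α) - (q : ℝ)) := by
      rw [show -(q : ℝ) - 2 / α = -(2 / α) - (q : ℝ) from by ring]
    calc (∑ j ∈ Finset.range (q + 1), (t ^ (-(q : ℝ) - 2 / α) * a j) *
          (s ^ j * gauss d s x y *
            iteratedDeriv j (fun s' : ℝ => ∑ k ∈ Finset.Icc 1 q,
              gam α k * (c * s') ^ (-(k : ℝ) * α / 2 - 1)) s))
        = gauss d s x y * ∑ j ∈ Finset.range (q + 1),
            a j * t ^ (-(2 / α) - (q : ℝ)) * (c * s) ^ j * iteratedDeriv j F (c * s) := by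
          rw [Finset.mul_sum]
          refine Finset.sum_congr rfl fun j _ => ?_
          rw [hE]
          linear_combination (t ^ (-(2 / α) - (q : ℝ)) * a j * gauss d s x y) * hbridge j
      _ = gauss d s x y *
            ((q.factorial : ℝ) * gam α q * s ^ (-(q : ℝ) * α / 2 - 1)) := by
          rw [hkey s hs0]
      _ = (q.factorial : ℝ) * gam α q * (s ^ (-(q : ℝ) * α / 2 - 1) * gauss d s x y) := by
          ring
  -- assemble
  rw [Finset.mul_sum]
  have hstep : ∀ j ∈ Finset.range (q + 1),
      t ^ (-(q : ℝ) - 2 / α) * (a j * ∫ s in Set.Ioi A,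
        s ^ j * gauss d s x y *
          iteratedDeriv j (fun s' : ℝ => ∑ k ∈ Finset.Icc 1 q,
            gam α k * (c * s') ^ (-(k : ℝ) * α / 2 - 1)) s)
      = ∫ s in Set.Ioi A, (t ^ (-(q : ℝ) - 2 / α) * a j) *
          (s ^ j * gauss d s x y *
            iteratedDeriv j (fun s' : ℝ => ∑ k ∈ Finset.Icc 1 q,
              gam α k * (c * s') ^ (-(k : ℝ) * α / 2 - 1)) s) := by
    intro j _
    rw [MeasureTheory.integral_const_mul]
    ring
  rw [Finset.sum_congr rfl hstep,
    ← MeasureTheory.integral_finset_sum _ (fun j _ => ((hintf j).const_mul _)),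
    MeasureTheory.setIntegral_congr_fun measurableSet_Ioi hpoint,
    MeasureTheory.integral_const_mul]
end
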